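/- arXiv:1508.06239 — 5 statements merged into one kernel-verified Lean document; each statement's English description precedes it below -/
import Mathlib

section
/- The operators Δ_{uv}, Δ_{vw} on Q(q)[u,v,w] (acting on the indicated pairs of variables) satisfy the braid relation Δ_{uv}·Δ_{vw}·Δ_{uv} = Δ_{vw}·Δ_{uv}·Δ_{vw}. -/
/-!
In the twisted group algebra of `S₃` over the fraction field, write `Δ_{uv} = α + β s` and
`Δ_{vw} = γ + δ t`. Expanding `Δ_{uv} Δ_{vw} Δ_{uv}` and `Δ_{vw} Δ_{uv} Δ_{vw}` over the six
permutations gives, after clearing the Vandermonde denominator `(v - u)(w - v)(w - u)`, the same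
polynomial coefficient in front of each permutation. Without fractions, each expansion is a
linear combination of the defining relations along the chain `P ↦ Δ P ↦ Δ Δ P ↦ Δ Δ Δ P` and
of their images under the swaps.
-/

noncomputable section
open MvPolynomial

abbrev K : Type := RatFunc ℚ

noncomputable def q : K := RatFunc.X

namespace MvPolynomial

variable {σ R : Type*} [CommRing R]

theorem X_sub_X_ne_zero [Nontrivial R] {i j : σ} (hij : i ≠ j) :
    (X i - X j : MvPolynomial σ R) ≠ 0 :=
  sub_ne_zero.mpr (X_injective.ne hij)

variable [DecidableEq σ]

/-- The Demazure–Lusztig operator with parameter `t` on the pair `(X i, X j)`, characterized by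
its defining relation multiplied through by `X j - X i`. -/
def IsDemazureLusztig (t : R) (i j : σ) (D : MvPolynomial σ R → MvPolynomial σ R) : Prop :=
  ∀ P, (X j - X i) * D P = C (t - 1) * X j * P + (X j - C t * X i) * rename (Equiv.swap i j) P

theorem IsDemazureLusztig.rename {t : R} {i j : σ} {D : MvPolynomial σ R → MvPolynomial σ R}
    (hD : IsDemazureLusztig t i j D) (τ : Equiv.Perm σ) (P : MvPolynomial σ R) :
    (X (τ j) - X (τ i)) * rename τ (D P) =
      (C t - 1) * X (τ j) * rename τ P +
        (X (τ j) - C t * X (τ i)) * rename ⇑(τ * Equiv.swap i j) P := by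
  simpa only [Equiv.Perm.coe_mul, map_mul, map_sub, rename_X, C_sub, C_1, map_add, algHom_C,
    algebraMap_eq, map_one, rename_rename] using congrArg (MvPolynomial.rename τ) (hD P)

/-- The common value of `(v - u)(w - v)(w - u)` times either side of the braid relation, for
`u = X i`, `v = X j`, `w = X k`; each coefficient is read off in the twisted group algebra. -/
def braidExpansion (t : R) (i j k : σ) (P : MvPolynomial σ R) : MvPolynomial σ R :=
  (C t - 1) * X k * (((C t ^ 2 - C t + 1) * X j - C t * X i) * X k - C t * X j * (X j - X i)) * P +
  (C t - 1) ^ 2 * X k ^ 2 * (X j - C t * X i) * rename (Equiv.swap i j) P +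
  (C t - 1) ^ 2 * X j * X k * (X k - C t * X j) * rename (Equiv.swap j k) P +
  (C t - 1) * X j * (X k - C t * X j) * (X k - C t * X i) *
    rename (Equiv.swap j k ∘ Equiv.swap i j) P +
  (C t - 1) * X k * (X j - C t * X i) * (X k - C t * X i) *
    rename (Equiv.swap i j ∘ Equiv.swap j k) P +
  (X j - C t * X i) * (X k - C t * X i) * (X k - C t * X j) * rename (Equiv.swap i k) P

variable [IsDomain R] {t : R} {i j k : σ} {D₁ D₂ : MvPolynomial σ R → MvPolynomial σ R}

theorem IsDemazureLusztig.vandermonde_mul_comp_comp_left (h₁ : IsDemazureLusztig t i j D₁)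
    (h₂ : IsDemazureLusztig t j k D₂) (hij : i ≠ j) (hjk : j ≠ k) (hik : i ≠ k)
    (P : MvPolynomial σ R) :
    (X j - X i) * (X k - X j) * (X k - X i) * D₁ (D₂ (D₁ P)) = braidExpansion t i j k P := by
  have e1 := h₁ P
  have e2 := h₂ (D₁ P)
  have e3 := h₁ (D₂ (D₁ P))
  have e4 := h₂.rename (Equiv.swap i j) (D₁ P)
  have e5 := h₁.rename (Equiv.swap j k) P
  have e6 := h₁.rename (Equiv.swap i j) P
  have e7 := h₁.rename (Equiv.swap i j * Equiv.swap j k) P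
  have hsts : Equiv.swap i j * Equiv.swap j k * Equiv.swap i j = Equiv.swap i k := by
    rw [Equiv.swap_comm i j, Equiv.swap_comm j k, Equiv.swap_mul_swap_mul_swap hjk.symm hik.symm]
  rw [hsts] at e7
  simp only [ne_eq, hij, hik, hjk.symm, hik.symm, not_false_eq_true, Equiv.swap_apply_left,
    Equiv.swap_apply_right, Equiv.swap_apply_of_ne_of_ne, Equiv.Perm.coe_mul, Equiv.swap_mul_self,
    Equiv.Perm.coe_one, rename_id, AlgHom.coe_id, id_eq, Function.comp_apply] at e4 e5 e6 e7
  simp only [map_sub, map_one] at e1 e2 e3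
  -- the `1/(v - u)` in the coefficients of `1` and `s` cancels only in their sum
  apply mul_left_cancel₀ (X_sub_X_ne_zero hij.symm)
  unfold braidExpansion
  linear_combination (X j - X i) * (X k - X j) * (X k - X i) * e3
    + (X j - X i) * (X k - X i) * (C t - 1) * X j * e2
    + (X j - X i) * (X k - X j) * (X j - C t * X i) * e4
    + (X k - X i) * (C t - 1) * X j * (C t - 1) * X k * e1
    + (X j - X i) * (C t - 1) * X j * (X k - C t * X j) * e5
    - (X k - X j) * (X j - C t * X i) * (C t - 1) * X k * e6
    + (X j - X i) * (X j - C t * X i) * (X k - C t * X i) * e7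

theorem IsDemazureLusztig.vandermonde_mul_comp_comp_right (h₁ : IsDemazureLusztig t i j D₁)
    (h₂ : IsDemazureLusztig t j k D₂) (hij : i ≠ j) (hjk : j ≠ k) (hik : i ≠ k)
    (P : MvPolynomial σ R) :
    (X j - X i) * (X k - X j) * (X k - X i) * D₂ (D₁ (D₂ P)) = braidExpansion t i j k P := by
  have e1 := h₂ P
  have e2 := h₁ (D₂ P)
  have e3 := h₂ (D₁ (D₂ P))
  have e4 := h₁.rename (Equiv.swap j k) (D₂ P)
  have e5 := h₂.rename (Equiv.swap i j) P
  have e6 := h₂.rename (Equiv.swap j k) P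
  have e7 := h₂.rename (Equiv.swap j k * Equiv.swap i j) P
  have htst : Equiv.swap j k * Equiv.swap i j * Equiv.swap j k = Equiv.swap i k := by
    rw [Equiv.swap_mul_swap_mul_swap hij hik, Equiv.swap_comm]
  rw [htst] at e7
  simp only [ne_eq, hij, hik, hjk.symm, hik.symm, not_false_eq_true, Equiv.swap_apply_left,
    Equiv.swap_apply_right, Equiv.swap_apply_of_ne_of_ne, Equiv.Perm.coe_mul, Equiv.swap_mul_self,
    Equiv.Perm.coe_one, rename_id, AlgHom.coe_id, id_eq, Function.comp_apply] at e4 e5 e6 e7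
  simp only [map_sub, map_one] at e1 e2 e3
  apply mul_left_cancel₀ (X_sub_X_ne_zero hjk.symm)
  unfold braidExpansion
  linear_combination (X k - X j) * (X j - X i) * (X k - X i) * e3
    + (X k - X j) * (X k - X i) * (C t - 1) * X k * e2
    + (X k - X j) * (X j - X i) * (X k - C t * X j) * e4
    + (X k - X i) * (C t - 1) * X k * (C t - 1) * X j * e1
    + (X k - X j) * (C t - 1) * X k * (X j - C t * X i) * e5
    - (X j - X i) * (X k - C t * X j) * (C t - 1) * X k * e6
    + (X k - X j) * (X k - C t * X j) * (X k - C t * X i) * e7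

theorem IsDemazureLusztig.braid (h₁ : IsDemazureLusztig t i j D₁)
    (h₂ : IsDemazureLusztig t j k D₂) (hij : i ≠ j) (hjk : j ≠ k) (hik : i ≠ k)
    (P : MvPolynomial σ R) :
    D₁ (D₂ (D₁ P)) = D₂ (D₁ (D₂ P)) := by
  have hΔ : (X j - X i) * (X k - X j) * (X k - X i) ≠ (0 : MvPolynomial σ R) :=
    mul_ne_zero (mul_ne_zero (X_sub_X_ne_zero hij.symm) (X_sub_X_ne_zero hjk.symm))
      (X_sub_X_ne_zero hik.symm)
  exact mul_left_cancel₀ hΔ <| (h₁.vandermonde_mul_comp_comp_left h₂ hij hjk hik P).trans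
    (h₁.vandermonde_mul_comp_comp_right h₂ hij hjk hik P).symm

end MvPolynomial

theorem delta_braid_relation
    (Duv Dvw : MvPolynomial (Fin 3) K → MvPolynomial (Fin 3) K)
    (hDuv : ∀ P : MvPolynomial (Fin 3) K,
      (X 1 - X 0) * Duv P =
        C (q - 1) * X 1 * P + (X 1 - C q * X 0) * rename (Equiv.swap (0 : Fin 3) 1) P)
    (hDvw : ∀ P : MvPolynomial (Fin 3) K,
      (X 2 - X 1) * Dvw P =
        C (q - 1) * X 2 * P + (X 2 - C q * X 1) * rename (Equiv.swap (1 : Fin 3) 2) P) :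
    ∀ P : MvPolynomial (Fin 3) K, Duv (Dvw (Duv P)) = Dvw (Duv (Dvw P)) :=
  fun P => IsDemazureLusztig.braid hDuv hDvw (by decide) (by decide) (by decide) P

end
end

section
/- Fix i ≥ 1 and variables y, x_1, x_2, …. Define f_{i,0} = y^i and f_{i,r+1} = Δ_{x_r,x_{r+1}}(f_{i,r}) for r ≥ 0 (with the convention x_0 = y). Let X_r = y + x_1 + ⋯ + x_r and X_{-1} = 0. Then f_{i,r} = (h_i[(1-q)X_r] − h_i[(1-q)X_{r-1}])/(1-q), where h_i[(1-q)Z] denotes the plethystic evaluation of the complete homogeneous symmetric function h_i at the alphabet (1-q)·Z. -/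
/-!
STATEMENT 4: With variables y = X 0, x_j = X j (j ≥ 1) over ℚ(q), define
f_{i,0} = y^i and f_{i,r+1} = Δ_{x_r,x_{r+1}} f_{i,r} (convention x_0 = y).
Let X_r = y + x_1 + ⋯ + x_r (the set of variables {0,…,r}), X_{-1} = 0.
Then f_{i,r} = (h_i[(1-q)X_r] − h_i[(1-q)X_{r-1}])/(1-q), where
h_i[(1-q)Z] = ∑_{a+b=i} (-q)^b e_b(Z) h_a(Z) (from Exp[(1-q)tZ] = ∏_{z∈Z} (1-qtz)/(1-tz)).
-/

noncomputable section
open MvPolynomial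

/-- elementary symmetric polynomial of the variables in `S` -/
noncomputable def myE (S : Finset ℕ) (n : ℕ) : MvPolynomial ℕ K :=
  ∑ T ∈ S.powersetCard n, ∏ i ∈ T, X i

/-- complete homogeneous symmetric polynomial of the variables in `S` -/
noncomputable def myH (S : Finset ℕ) (n : ℕ) : MvPolynomial ℕ K :=
  ∑ m ∈ S.sym n, (Multiset.map X m.1).prod

/-- the plethystic evaluation h_i[(1-q)·Z] where Z is the sum of the variables in `S` -/
noncomputable def hq (S : Finset ℕ) (i : ℕ) : MvPolynomial ℕ K :=
  ∑ b ∈ Finset.range (i + 1), ((-q) ^ b) • (myE S b * myH S (i - b))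

/-! Adjoining a variable `z` to the alphabet multiplies `∑ₙ hq S n tⁿ = ∏_{s ∈ S} (1 - q t s)/(1 - t s)`
by `(1 - q t z)/(1 - t z)`; on coefficients this is the recursion `hq_insert`. Three instances of
it show that `F_r = hq {0,…,r} - hq {0,…,r-1}` satisfies
`(x_{r+1} - x_r) F_{r+1} = (q - 1) x_{r+1} F_r + (x_{r+1} - q x_r) s_r F_r`, where the transposition
`s_r` of `x_r, x_{r+1}` sends `{0,…,r}` to `{0,…,r-1, r+1}`; that is, `Δ F_r = F_{r+1}`.
The induction starts from `hq {y} i = (1 - q) yⁱ` for `i ≥ 1`. -/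

open Finset

section Convolution

variable {R : Type*} [CommSemiring R] (x : R) {a a' b g : ℕ → R}

theorem Finset.Nat.sum_antidiagonal_succ_of_succ_eq_left (h0 : a 0 = a' 0)
    (hsucc : ∀ m, a (m + 1) = a' (m + 1) + x * b m) (n : ℕ) :
    ∑ p ∈ antidiagonal (n + 1), a p.1 * g p.2 =
      ∑ p ∈ antidiagonal (n + 1), a' p.1 * g p.2 + x * ∑ p ∈ antidiagonal n, b p.1 * g p.2 := by
  simp only [Nat.sum_antidiagonal_succ, hsucc, h0, add_mul, sum_add_distrib, mul_sum, mul_assoc]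
  ring

theorem Finset.Nat.sum_antidiagonal_succ_of_succ_eq_right (h0 : a 0 = a' 0)
    (hsucc : ∀ m, a (m + 1) = a' (m + 1) + x * b m) (n : ℕ) :
    ∑ p ∈ antidiagonal (n + 1), g p.1 * a p.2 =
      ∑ p ∈ antidiagonal (n + 1), g p.1 * a' p.2 + x * ∑ p ∈ antidiagonal n, g p.1 * b p.2 := by
  simp only [Nat.sum_antidiagonal_succ', hsucc, h0, mul_add, sum_add_distrib, mul_sum,
    mul_left_comm (g _) x]
  ring

end Convolution

lemma myE_zero (S : Finset ℕ) : myE S 0 = 1 := by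
  simp [myE]

lemma myH_zero (S : Finset ℕ) : myH S 0 = 1 := by
  rw [myH, sym_zero, sum_singleton]
  rfl

lemma myE_empty_succ (n : ℕ) : myE ∅ (n + 1) = 0 := by
  rw [myE, powersetCard_eq_empty.2 (by simp), sum_empty]

lemma myH_empty_succ (n : ℕ) : myH ∅ (n + 1) = 0 := by
  simp [myH]

lemma myE_insert {z : ℕ} {T : Finset ℕ} (hz : z ∉ T) (n : ℕ) :
    myE (insert z T) (n + 1) = myE T (n + 1) + X z * myE T n := by
  have hzA : ∀ A ∈ T.powersetCard n, z ∉ A := fun A hA h => hz (mem_powersetCard.1 hA |>.1 h)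
  rw [myE, powersetCard_succ_insert hz, sum_union, sum_image, myE, myE, mul_sum]
  · exact congrArg _ (sum_congr rfl fun A hA => prod_insert (hzA A hA))
  · intro A hA B hB h
    rw [← erase_insert (hzA A hA), ← erase_insert (hzA B hB), h]
  · refine disjoint_left.2 fun A hA hA' => ?_
    obtain ⟨B, -, rfl⟩ := mem_image.1 hA'
    exact hz (mem_powersetCard.1 hA |>.1 (mem_insert_self z B))

theorem Finset.sym_succ_insert {α : Type*} [DecidableEq α] {z : α} {T : Finset α} (hz : z ∉ T)
    (n : ℕ) :
    (insert z T).sym (n + 1) = T.sym (n + 1) ∪ ((insert z T).sym n).image (Sym.cons z) := by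
  ext m
  simp only [mem_union, mem_sym_iff, mem_image, mem_insert]
  constructor
  · intro h
    by_cases hm : z ∈ m
    · exact Or.inr ⟨m.erase z hm, fun a ha => h a (Multiset.mem_of_mem_erase ha),
        Sym.cons_erase hm⟩
    · exact Or.inl fun a ha => (h a ha).resolve_left fun hza => hm (hza ▸ ha)
  · rintro (h | ⟨m', hm', rfl⟩) a ha
    · exact Or.inr (h a ha)
    · rcases Sym.mem_cons.1 ha with rfl | ha
      exacts [Or.inl rfl, hm' a ha]

lemma myH_insert {z : ℕ} {T : Finset ℕ} (hz : z ∉ T) (n : ℕ) :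
    myH (insert z T) (n + 1) = myH T (n + 1) + X z * myH (insert z T) n := by
  rw [myH, sym_succ_insert hz, sum_union, sum_image, myH, myH, mul_sum]
  · simp [Sym.coe_cons]
  · exact fun m _ m' _ => (Sym.cons_inj_right z m m').1
  · refine disjoint_left.2 fun m hm hm' => ?_
    obtain ⟨m', -, rfl⟩ := mem_image.1 hm'
    exact hz (mem_sym_iff.1 hm z (Sym.mem_cons_self z m'))

lemma hq_eq_sum_antidiagonal (S : Finset ℕ) (n : ℕ) :
    hq S n = ∑ p ∈ antidiagonal n, (-C q) ^ p.1 * myE S p.1 * myH S p.2 := by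
  rw [hq, ← Nat.sum_antidiagonal_eq_sum_range_succ (fun b a => (-q) ^ b • (myE S b * myH S a))]
  simp [smul_eq_C_mul, mul_assoc]

lemma hq_zero (S : Finset ℕ) : hq S 0 = 1 := by
  simp [hq_eq_sum_antidiagonal, myE_zero, myH_zero]

lemma hq_empty_succ (n : ℕ) : hq ∅ (n + 1) = 0 := by
  simp [hq_eq_sum_antidiagonal, Nat.sum_antidiagonal_succ, myE_empty_succ, myH_empty_succ]

lemma hq_insert {z : ℕ} {T : Finset ℕ} (hz : z ∉ T) (n : ℕ) :
    hq (insert z T) (n + 1) =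
      X z * hq (insert z T) n + hq T (n + 1) - C q * X z * hq T n := by
  set e : Finset ℕ → ℕ → MvPolynomial ℕ K := fun S b => (-C q) ^ b * myE S b
  -- `z` is peeled off the `h`-factor, then off the `e`-factor; the two steps meet at the mixed
  -- sum `∑ (-q)ᵇ e_b(T ∪ {z}) h_{n+1-b}(T)`.
  have hH := Nat.sum_antidiagonal_succ_of_succ_eq_right (X z) (g := e (insert z T))
    ((myH_zero _).trans (myH_zero T).symm) (myH_insert hz) n
  have hE := Nat.sum_antidiagonal_succ_of_succ_eq_left (-C q * X z) (g := myH T)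
    (a := e (insert z T)) (a' := e T) (b := e T) (by simp [e, myE_zero])
    (fun m => by simp only [e, myE_insert hz]; ring) n
  simp only [hq_eq_sum_antidiagonal]
  linear_combination hH + hE

lemma hq_singleton_succ (z n : ℕ) : hq {z} (n + 1) = C (1 - q) * X z ^ (n + 1) := by
  have h := hq_insert (T := ∅) (notMem_empty z)
  simp only [insert_empty, hq_empty_succ] at h
  induction n with
  | zero => rw [h, hq_zero, hq_zero, map_sub, map_one]; ring
  | succ m ih => rw [h, ih, hq_empty_succ]; ring

lemma rename_myE (g : ℕ ↪ ℕ) (S : Finset ℕ) (n : ℕ) :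
    rename g (myE S n) = myE (S.map g) n := by
  simp [myE, powersetCard_map, map_prod]

lemma rename_myH (g : ℕ ↪ ℕ) (S : Finset ℕ) (n : ℕ) :
    rename g (myH S n) = myH (S.map g) n := by
  simp [myH, sym_map, map_multiset_prod, Multiset.map_map]

lemma rename_hq (g : ℕ ↪ ℕ) (S : Finset ℕ) (n : ℕ) :
    rename g (hq S n) = hq (S.map g) n := by
  simp [hq_eq_sum_antidiagonal, rename_myE, rename_myH]

lemma X_sub_X_mul_hq_insert_insert_sub {a b : ℕ} {T : Finset ℕ} (hab : a ≠ b) (ha : a ∉ T)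
    (hb : b ∉ T) (n : ℕ) :
    (X b - X a) * (hq (insert b (insert a T)) n - hq (insert a T) n) =
      C (q - 1) * X b * (hq (insert a T) n - hq T n) +
        (X b - C q * X a) * (hq (insert b T) n - hq T n) := by
  induction n with
  | zero => simp only [hq_zero]; ring
  | succ n ih =>
    have hbaT : b ∉ insert a T := by simp [hab.symm, hb]
    rw [hq_insert hbaT, hq_insert ha, hq_insert hb, map_sub, map_one]
    rw [map_sub, map_one] at ih
    linear_combination X b * ih

lemma one_sub_q_ne_zero : (1 : K) - q ≠ 0 := fun h => by
  simpa [q] using congrArg RatFunc.intDegree (sub_eq_zero.1 h)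

lemma map_swap_range (r : ℕ) :
    (range r).map (Equiv.swap r (r + 1)).toEmbedding = range r := by
  ext a
  simp only [mem_map_equiv, mem_range, Equiv.symm_swap, Equiv.swap_apply_def]
  split_ifs <;> omega

theorem f_ir_closed_form (i : ℕ) (hi : 1 ≤ i)
    (D : ℕ → MvPolynomial ℕ K → MvPolynomial ℕ K)
    (hD : ∀ (r : ℕ) (P : MvPolynomial ℕ K),
      (X (r + 1) - X r) * D r P =
        C (q - 1) * X (r + 1) * P + (X (r + 1) - C q * X r) * rename (Equiv.swap r (r + 1)) P)
    (f : ℕ → MvPolynomial ℕ K)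
    (hf0 : f 0 = X 0 ^ i)
    (hfs : ∀ r : ℕ, f (r + 1) = D r (f r)) :
    ∀ r : ℕ, f r = C (1 - q)⁻¹ *
      (hq (Finset.range (r + 1)) i - hq (Finset.range r) i) := by
  intro r
  induction r with
  | zero =>
    obtain ⟨n, rfl⟩ := Nat.exists_eq_add_of_le' hi
    rw [hf0, range_one, range_zero, hq_singleton_succ, hq_empty_succ, sub_zero, ← mul_assoc,
      ← map_mul, inv_mul_cancel₀ one_sub_q_ne_zero, map_one, one_mul]
  | succ r ih =>
    have hswap : rename (Equiv.swap r (r + 1)) (f r) =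
        C (1 - q)⁻¹ * (hq (insert (r + 1) (range r)) i - hq (range r) i) := by
      rw [ih, map_mul, rename_C, map_sub, ← Equiv.coe_toEmbedding, rename_hq, rename_hq,
        range_add_one, map_insert, map_swap_range, Equiv.coe_toEmbedding, Equiv.swap_apply_left]
    have hne : (X (r + 1) - X r : MvPolynomial ℕ K) ≠ 0 :=
      sub_ne_zero.2 fun h => r.succ_ne_self (X_injective h)
    apply mul_left_cancel₀ hne
    rw [hfs, hD, hswap, ih, range_add_one (n := r + 1), range_add_one (n := r)]
    linear_combination -C (1 - q)⁻¹ *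
      X_sub_X_mul_hq_insert_insert_sub r.succ_ne_self.symm (notMem_range_self) (by simp) i

end
end

section
/- Let Γ_+(u) denote the operator on Sym[X] sending F[X] to F[X+u] (plethystic translation by a single variable u), and let B_i be the operator (B_i F)[X] = F[X - (q-1)z^{-1}]·Exp[-zX] |_{z^i}. Then for any monomial u and integer i one has the operator identities Γ_+(u)·B_i = (B_i − u·B_{i-1})·Γ_+(u) and B_i·Γ_+(−u) = Γ_+(−u)·(B_i − u·B_{i-1}). -/
/-!
STATEMENT 7: Let Γ₊(u) be the plethystic translation F[X] ↦ F[X+u] by the single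
letter u = a·y^m (a monomial), and B_i the operator
(B_i F)[X] = F[X−(q−1)z⁻¹]·Exp[−zX]|_{z^i}. Then for any monomial u and integer i:
Γ₊(u)·B_i = (B_i − u·B_{i−1})·Γ₊(u) and B_i·Γ₊(−u) = Γ₊(−u)·(B_i − u·B_{i−1}).
Sym[X] is presented in the power-sum basis over ℚ(q): the ring is
R = MvPolynomial (ℕ ⊕ Unit) K, where inl m ↦ p_{m+1} and inr () is the extra letter y.
Γ₊(u) : p_n ↦ p_n + u^n (u a single letter), Γ₊(−u) : p_n ↦ p_n − u^n.
-/

noncomputable section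
open MvPolynomial

/-- Sym[X] with one extra letter y adjoined, in the power-sum presentation:
`Sum.inl m` is the power sum p_{m+1}, `Sum.inr ()` is the letter y. -/
abbrev R : Type := MvPolynomial (ℕ ⊕ Unit) K

/-- the letter y -/
noncomputable def yv : R := X (Sum.inr ())

/-- Γ₊(u) for the monomial u = a·y^m, treated as a single letter:
p_n ↦ p_n + a^n y^{mn}. -/
noncomputable def Gp (a : K) (m : ℕ) : R →ₐ[K] R :=
  aeval (fun s => match s with
    | Sum.inl n => X (Sum.inl n) + C (a ^ (n + 1)) * yv ^ (m * (n + 1))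
    | Sum.inr _ => yv)

/-- Γ₊(−u) for the monomial u = a·y^m: p_n ↦ p_n − a^n y^{mn}
(translation by the negated letter −u). -/
noncomputable def Gm (a : K) (m : ℕ) : R →ₐ[K] R :=
  aeval (fun s => match s with
    | Sum.inl n => X (Sum.inl n) - C (a ^ (n + 1)) * yv ^ (m * (n + 1))
    | Sum.inr _ => yv)

/-- e_k[X] in the power-sum presentation, via Newton's identity. -/
noncomputable def Ee : ℕ → R
  | 0 => 1
  | (k+1) => (((k : K) + 1)⁻¹) •
      ∑ i ∈ Finset.range (k + 1), ((-1 : K) ^ i) • (X (Sum.inl i) * Ee (k - i))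
  decreasing_by exact Nat.lt_succ_of_le (Nat.sub_le k i)

/-- the substitution F[X] ↦ F[X − (q−1)z⁻¹], with `Polynomial.X` standing for z⁻¹ -/
noncomputable def phiB : R →ₐ[K] Polynomial R :=
  aeval (fun s => match s with
    | Sum.inl n => Polynomial.C (X (Sum.inl n) : R) -
        Polynomial.C (MvPolynomial.C (q ^ (n + 1) - 1)) * Polynomial.X ^ (n + 1)
    | Sum.inr _ => Polynomial.C yv)

/-- the operator (B_r F)[X] = F[X−(q−1)z⁻¹]·Exp[−zX]|_{z^r} for any integer r,
using Exp[−zX] = ∑_k (−1)^k e_k[X] z^k. -/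
noncomputable def Bop (r : ℤ) (F : R) : R :=
  ∑ j ∈ Finset.range ((phiB F).natDegree + 1),
    if 0 ≤ r + j then
      ((-1 : K) ^ ((r + j).toNat)) • (Ee ((r + j).toNat) * (phiB F).coeff j)
    else 0

/-! Write `Exp[-zX] = ∑_r c_r z^r`. Translation by a letter multiplies it by `1 - uz`,
so `Γ₊(u) c_r = c_r - u c_{r-1}`; in the power-sum presentation this follows from Newton's
identities by induction on `r`. Since `u` only involves `y`, `Γ₊(u)` commutes with
`F ↦ F[X - (q-1)z⁻¹]` coefficientwise in `z⁻¹`, and `B_i F = ∑_j c_{i+j} [z^{-j}] F[X - (q-1)z⁻¹]`;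
applying `Γ₊(u)` term by term gives the first identity. The second is the first conjugated
by `Γ₊(-u) = Γ₊(u)⁻¹`. -/

/-- The coefficient of `z ^ r` in `Exp[-zX] = ∑ₖ (-1)ᵏ eₖ[X] zᵏ`, zero for `r < 0`. -/
def expCoeff (r : ℤ) : R := if 0 ≤ r then (-1 : K) ^ r.toNat • Ee r.toNat else 0

lemma expCoeff_of_neg {r : ℤ} (hr : r < 0) : expCoeff r = 0 := if_neg (not_le.2 hr)

lemma expCoeff_natCast (k : ℕ) : expCoeff k = (-1 : K) ^ k • Ee k := by
  simp [expCoeff]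

lemma expCoeff_zero : expCoeff 0 = 1 := by
  simpa [Ee] using expCoeff_natCast 0

lemma expCoeff_neg_one : expCoeff (-1) = 0 := expCoeff_of_neg (by norm_num)

lemma natCast_smul_expCoeff_eq_neg_sum (k : ℕ) :
    (k : K) • expCoeff k = -∑ i ∈ Finset.range k, X (Sum.inl i) * expCoeff (k - 1 - i) := by
  cases k with
  | zero => simp
  | succ k =>
    have hk : ((k : K) + 1) ≠ 0 := Nat.cast_add_one_ne_zero k
    rw [expCoeff_natCast, Ee, smul_comm, Nat.cast_succ, smul_inv_smul₀ hk, Finset.smul_sum,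
      ← Finset.sum_neg_distrib]
    refine Finset.sum_congr rfl fun i hi => ?_
    obtain ⟨d, rfl⟩ := Nat.exists_eq_add_of_le (Nat.lt_succ_iff.1 (Finset.mem_range.1 hi))
    rw [show ((i + d + 1 : ℕ) : ℤ) - 1 - i = d by push_cast; ring, expCoeff_natCast,
      Nat.add_sub_cancel_left, smul_smul, mul_smul_comm, ← neg_smul]
    congr 1
    rw [← pow_add, show i + d + 1 + i = 2 * i + d + 1 by ring, pow_succ, pow_add, pow_mul,
      neg_one_sq, one_pow, one_mul, mul_neg_one]

lemma phiB_X_inl (n : ℕ) : phiB (X (Sum.inl n)) =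
    Polynomial.C (X (Sum.inl n)) - Polynomial.C (C (q ^ (n + 1) - 1)) * Polynomial.X ^ (n + 1) := by
  simp [phiB]

lemma phiB_yv : phiB yv = Polynomial.C yv := by
  simp [phiB, yv]

lemma Bop_eq_sum (r : ℤ) (F : R) {N : ℕ} (hN : (phiB F).natDegree < N) :
    Bop r F = ∑ j ∈ Finset.range N, expCoeff (r + j) * (phiB F).coeff j := by
  rw [Bop]
  refine (Finset.sum_subset (Finset.range_subset_range.2 hN) fun j _ hj => ?_).trans
    (Finset.sum_congr rfl fun j _ => ?_)
  · rw [Polynomial.coeff_eq_zero_of_natDegree_lt (by simpa using hj)]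
    simp
  · rw [expCoeff]
    split_ifs <;> simp

/-- `σ` is the plethystic translation `X ↦ X + u` by the single letter `u`:
`p_{n+1} ↦ p_{n+1} + u ^ (n + 1)`. -/
def IsLetterTranslation (σ : R →ₐ[K] R) (u : R) : Prop :=
  ∀ n, σ (X (Sum.inl n)) = X (Sum.inl n) + u ^ (n + 1)

namespace IsLetterTranslation

variable {σ : R →ₐ[K] R} {u : R}

/- Apply `σ` to Newton's identity for `expCoeff (k + 1)`: the terms without `u` reproduce
Newton's identities at `k + 1` and at `k`, and those with `u ^ (i + 1)` telescope. -/
lemma map_expCoeff_succ (hσ : IsLetterTranslation σ u) (k : ℕ)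
    (ih : ∀ r : ℤ, r ≤ k → σ (expCoeff r) = expCoeff r - u * expCoeff (r - 1)) :
    σ (expCoeff (k + 1)) = expCoeff (k + 1) - u * expCoeff k := by
  let f : ℕ → R := fun i => u ^ (i + 1) * expCoeff (k - i)
  have hterm : ∀ i ∈ Finset.range (k + 1), σ (X (Sum.inl i) * expCoeff (k - i)) =
      X (Sum.inl i) * expCoeff (k - i) - u * (X (Sum.inl i) * expCoeff (k - 1 - i)) +
        (f i - f (i + 1)) := by
    intro i hi
    rw [map_mul, hσ i, ih _ (by omega)]
    simp only [f, Nat.cast_succ, show (k : ℤ) - i - 1 = k - 1 - i by ring,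
      show (k : ℤ) - (i + 1) = k - 1 - i by ring]
    ring
  have htelescope : f 0 - f (k + 1) = u * expCoeff k := by
    simp [f, expCoeff_neg_one]
  have hnewton : ∑ i ∈ Finset.range (k + 1), X (Sum.inl i) * expCoeff (k - 1 - i) =
      -((k : K) • expCoeff k) := by
    rw [Finset.sum_range_succ, expCoeff_of_neg (by omega), mul_zero, add_zero,
      natCast_smul_expCoeff_eq_neg_sum, neg_neg]
  have hnewton_succ : ∑ i ∈ Finset.range (k + 1), X (Sum.inl i) * expCoeff (k - i) =
      -(((k : K) + 1) • expCoeff (k + 1)) := by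
    have h := natCast_smul_expCoeff_eq_neg_sum (k + 1)
    simp only [Nat.cast_succ, add_sub_cancel_right] at h
    rw [h, neg_neg]
  have hk : ((k : K) + 1) ≠ 0 := Nat.cast_add_one_ne_zero k
  apply smul_right_injective R hk
  calc ((k : K) + 1) • σ (expCoeff (k + 1))
      = -∑ i ∈ Finset.range (k + 1), σ (X (Sum.inl i) * expCoeff (k - i)) := by
        rw [← map_smul, ← neg_neg (((k : K) + 1) • _), ← hnewton_succ, map_neg, map_sum]
    _ = ((k : K) + 1) • expCoeff (k + 1) - u * ((k : K) • expCoeff k) - u * expCoeff k := by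
        rw [Finset.sum_congr rfl hterm, Finset.sum_add_distrib, Finset.sum_sub_distrib,
          ← Finset.mul_sum, Finset.sum_range_sub', htelescope, hnewton, hnewton_succ, mul_neg]
        abel
    _ = ((k : K) + 1) • (expCoeff (k + 1) - u * expCoeff k) := by
        simp only [smul_eq_C_mul, map_add, map_one, map_natCast]
        ring

lemma map_expCoeff (hσ : IsLetterTranslation σ u) (r : ℤ) :
    σ (expCoeff r) = expCoeff r - u * expCoeff (r - 1) := by
  suffices h : ∀ k : ℕ, ∀ r : ℤ, r ≤ k → σ (expCoeff r) = expCoeff r - u * expCoeff (r - 1) from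
    h r.toNat r (Int.self_le_toNat r)
  intro k
  induction k with
  | zero =>
    intro r hr
    rcases hr.lt_or_eq with hr | rfl
    · simp [expCoeff_of_neg hr, expCoeff_of_neg (show r - 1 < 0 by omega)]
    · simp [expCoeff_zero, expCoeff_neg_one]
  | succ k ih =>
    intro r hr
    rcases (show r ≤ k ∨ r = k + 1 by omega) with hr | rfl
    · exact ih r hr
    · simpa using hσ.map_expCoeff_succ k ih

lemma phiB_map (hσ : IsLetterTranslation σ u) (hy : σ yv = yv)
    (hu : phiB u = Polynomial.C u) (F : R) :
    phiB (σ F) = (phiB F).map σ := by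
  have h : phiB.comp σ = (Polynomial.mapAlgHom σ).comp phiB := by
    refine MvPolynomial.algHom_ext fun s => ?_
    rcases s with n | ⟨⟨⟩⟩
    · simp only [AlgHom.comp_apply, hσ n, map_add, map_pow, hu, phiB_X_inl,
        Polynomial.coe_mapAlgHom, Polynomial.map_sub, Polynomial.map_mul, Polynomial.map_C,
        Polynomial.map_pow, Polynomial.map_X, AlgHom.coe_toRingHom, algHom_C, algebraMap_eq]
      ring
    · change phiB (σ yv) = Polynomial.mapAlgHom σ (phiB yv)
      rw [hy, phiB_yv, Polynomial.coe_mapAlgHom, Polynomial.map_C, RingHom.coe_coe, hy]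
  exact DFunLike.congr_fun h F

theorem map_Bop (hσ : IsLetterTranslation σ u) (hy : σ yv = yv)
    (hu : phiB u = Polynomial.C u) (i : ℤ) (F : R) :
    σ (Bop i F) = Bop i (σ F) - u * Bop (i - 1) (σ F) := by
  have hN : (phiB (σ F)).natDegree < (phiB F).natDegree + 1 := by
    rw [hσ.phiB_map hy hu]
    exact Nat.lt_succ_of_le Polynomial.natDegree_map_le
  rw [Bop_eq_sum i F (Nat.lt_succ_self _), Bop_eq_sum i (σ F) hN, Bop_eq_sum (i - 1) (σ F) hN,
    map_sum, Finset.mul_sum, ← Finset.sum_sub_distrib]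
  refine Finset.sum_congr rfl fun j _ => ?_
  rw [map_mul, hσ.map_expCoeff, hσ.phiB_map hy hu,
    Polynomial.coeff_map, sub_add_eq_add_sub, RingHom.coe_coe]
  ring

end IsLetterTranslation

section GammaPlus

variable (a : K) (m : ℕ)

lemma isLetterTranslation_Gp : IsLetterTranslation (Gp a m) (C a * yv ^ m) := fun n => by
  simp [Gp, mul_pow, ← pow_mul, mul_comm]

lemma Gm_X_inl (n : ℕ) : Gm a m (X (Sum.inl n)) = X (Sum.inl n) - (C a * yv ^ m) ^ (n + 1) := by
  simp [Gm, mul_pow, ← pow_mul, mul_comm]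

lemma Gp_yv : Gp a m yv = yv := by simp [Gp, yv]

lemma Gm_yv : Gm a m yv = yv := by simp [Gm, yv]

lemma phiB_C_mul_yv_pow : phiB (C a * yv ^ m) = Polynomial.C (C a * yv ^ m) := by
  simp [phiB, yv]

lemma Gm_Gp (F : R) : Gm a m (Gp a m F) = F := by
  have h : (Gm a m).comp (Gp a m) = AlgHom.id K R := by
    refine MvPolynomial.algHom_ext fun s => ?_
    rcases s with n | ⟨⟨⟩⟩
    · simp [isLetterTranslation_Gp a m n, Gm_X_inl, Gm_yv]
    · exact (congrArg (Gm a m) (Gp_yv a m)).trans (Gm_yv a m)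
  exact DFunLike.congr_fun h F

lemma Gp_Gm (F : R) : Gp a m (Gm a m F) = F := by
  have h : (Gp a m).comp (Gm a m) = AlgHom.id K R := by
    refine MvPolynomial.algHom_ext fun s => ?_
    rcases s with n | ⟨⟨⟩⟩
    · simp [isLetterTranslation_Gp a m n, Gm_X_inl, Gp_yv]
    · exact (congrArg (Gp a m) (Gm_yv a m)).trans (Gp_yv a m)
  exact DFunLike.congr_fun h F

end GammaPlus

theorem gammaPlus_B_commutation (a : K) (m : ℕ) (i : ℤ) :
    (∀ F : R, Gp a m (Bop i F) =
        Bop i (Gp a m F) - (C a * yv ^ m) * Bop (i - 1) (Gp a m F)) ∧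
    (∀ F : R, Bop i (Gm a m F) =
        Gm a m (Bop i F - (C a * yv ^ m) * Bop (i - 1) F)) := by
  have hGp := (isLetterTranslation_Gp a m).map_Bop (Gp_yv a m) (phiB_C_mul_yv_pow a m) i
  refine ⟨hGp, fun F => ?_⟩
  have h := hGp (Gm a m F)
  rw [Gp_Gm] at h
  rw [← h, Gm_Gp]

end
end

section
/- For any Dyck path π and a weight function wt: c(π) → R on the corners of π, and a chosen corner (i,j) ∈ c(π), one has χ(π, wt) = ((q·wt(i,j) − 1)/(q−1))·χ(π, wt₁) + ((1 − wt(i,j))/(q−1))·χ(π′, wt₂), where wt₁ equals wt except that wt₁(i,j) = 1, π′ is π with the corner (i,j) flipped (the smallest Dyck path above both π and the cell (i,j)), and wt₂ agrees with wt on corners of π′ that are corners of π and is 1 elsewhere. -/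
/-!
A corner `(i, j)` of `π` is a valley `EN` of its word, at positions `e, e + 1`, formed by the
`i`-th East and the `j`-th North step. Flipping it to `NE` changes the lists of step positions
only by the transposition `(e e+1)`, so `Area(π') = Area(π) ∪ {(i, j)}` (with `i < j` by the
Dyck condition on the prefix ending at `e`) and `c(π') ∩ c(π) = c(π) \ {(i, j)}`.
The identity then holds summand by summand in `w`: if `w_i ≤ w_j`, the coefficients add up to
`(q·wt - 1)/(q - 1) + (1 - wt)/(q - 1) = wt`; if `w_i > w_j`, the new inversion of `π'`
contributes a factor `q`, and `(q·wt - 1)/(q - 1) + q·(1 - wt)/(q - 1) = 1`.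
-/

noncomputable section
open MvPolynomial

/-- A Dyck word: `true` = North step, `false` = East step; equal numbers of each,
and every prefix has at least as many North as East steps (path stays above the diagonal). -/
def IsDyckWord (s : List Bool) : Prop :=
  s.count true = s.count false ∧ ∀ k : ℕ, ((s.take k).count false) ≤ ((s.take k).count true)

/-- the (sorted) list of positions of the North steps of `s` -/
def Npos (s : List Bool) : List ℕ :=
  (List.range s.length).filter (fun p => s.getD p false = true)

/-- the (sorted) list of positions of the East steps of `s` -/
def Epos (s : List Bool) : List ℕ :=
  (List.range s.length).filter (fun p => s.getD p false = false)

/-- `Area(π)`: the pairs `(i,j)` (0-indexed; cell in column i+1, row j+1) with `i < j`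
such that the cell lies under the path, i.e. the (j+1)-st North step occurs before the
(i+1)-st East step. -/
def area (s : List Bool) (n : ℕ) : Finset (Fin n × Fin n) :=
  Finset.univ.filter (fun p => (p.1 : ℕ) < (p.2 : ℕ) ∧
    (Npos s).getD p.2 0 < (Epos s).getD p.1 0)

/-- `c(π)`: corners, i.e. cells `(i,j)` (0-indexed) above the path whose southern and
eastern neighbours are below the path. -/
def corners (s : List Bool) (n : ℕ) : Finset (Fin n × Fin n) :=
  Finset.univ.filter (fun p => ¬ ((Npos s).getD p.2 0 < (Epos s).getD p.1 0) ∧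
    (Npos s).getD ((p.2 : ℕ) - 1) 0 < (Epos s).getD p.1 0 ∧
    (Npos s).getD p.2 0 < (Epos s).getD ((p.1 : ℕ) + 1) 0)

/-- The characteristic function `χ(π) = ∑_{w ∈ ℤ_{>0}^n} q^{inv(π,w)} x_w`
as a formal power series in the variables x_i, i ∈ ℤ_{>0}; the coefficient of
a monomial d is the (finite) sum of q^{inv(π,w)} over all w whose monomial x_w is d. -/
noncomputable def chi {n : ℕ} (A : Finset (Fin n × Fin n)) : MvPowerSeries ℕ+ K :=
  fun d : ℕ+ →₀ ℕ =>
    ∑ w : Fin n → {x // x ∈ d.support},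
      if (∑ i : Fin n, Finsupp.single ((w i : ℕ+)) 1) = d
      then q ^ ((A.filter (fun p => (w p.1 : ℕ+) > (w p.2 : ℕ+))).card) else 0

/-- The weighted characteristic function `χ(π, wt)`, where `A = Area(π)`,
`Cn = c(π)` and `wt` is the weight function on corners. -/
noncomputable def chiwt {n : ℕ} (A Cn : Finset (Fin n × Fin n))
    (wt : Fin n × Fin n → K) : MvPowerSeries ℕ+ K :=
  fun d : ℕ+ →₀ ℕ =>
    ∑ w : Fin n → {x // x ∈ d.support},
      if (∑ i : Fin n, Finsupp.single ((w i : ℕ+)) 1) = d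
      then q ^ ((A.filter (fun p => (w p.1 : ℕ+) > (w p.2 : ℕ+))).card) *
        ∏ p ∈ Cn.filter (fun p => (w p.1 : ℕ+) ≤ (w p.2 : ℕ+)), wt p
      else 0

/-- flip the corner of π whose cell lies in (0-indexed) column i: swap the adjacent
East/North steps at the corresponding valley of the path. -/
def flipAt (s : List Bool) (i : ℕ) : List Bool :=
  (s.set ((Epos s).getD i 0) true).set ((Epos s).getD i 0 + 1) false

namespace List

theorem length_filter_eq_of_forall_getElem {α : Type*} {l : List α} {p : α → Bool} {k : ℕ}
    (hk : k ≤ l.length) (h : ∀ a (ha : a < l.length), p l[a] ↔ a < k) :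
    (l.filter p).length = k := by
  rw [← take_append_drop k l, filter_append, filter_eq_self.2, filter_eq_nil_iff.2, append_nil,
    length_take, min_eq_left hk]
  · intro x hx
    obtain ⟨m, hm, rfl⟩ := mem_iff_getElem.1 hx
    rw [getElem_drop, h]
    omega
  · intro x hx
    obtain ⟨m, hm, rfl⟩ := mem_iff_getElem.1 hx
    rw [length_take] at hm
    rw [getElem_take, h]
    omega

theorem lt_length_of_getD_ne {α : Type*} {l : List α} {k : ℕ} {d : α} (h : l.getD k d ≠ d) :
    k < l.length := by
  by_contra hk
  exact h (getD_eq_default _ _ (not_lt.1 hk))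

theorem getD_ne_of_notMem {α : Type*} {l : List α} {x d : α} (hx : x ∉ l) (hd : x ≠ d)
    (k : ℕ) : l.getD k d ≠ x := by
  rcases lt_or_ge k l.length with hk | hk
  · rw [getD_eq_getElem _ _ hk]
    exact fun h => hx (h ▸ getElem_mem hk)
  · rw [getD_eq_default _ _ hk]
    exact hd.symm

theorem Nodup.getD_eq_iff {α : Type*} {l : List α} (hl : l.Nodup) {j k : ℕ} {x d : α}
    (hj : l[j]? = some x) (hd : x ≠ d) : l.getD k d = x ↔ k = j := by
  refine ⟨fun h => ?_, fun h => by rw [h, getD_eq_getElem?_getD, hj, Option.getD_some]⟩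
  have hk : k < l.length := lt_length_of_getD_ne (h ▸ hd)
  rw [getD_eq_getElem?_getD, getElem?_eq_getElem hk, Option.getD_some] at h
  exact (getElem?_inj hk hl).1 (by rw [getElem?_eq_getElem hk, h, hj])

theorem SortedLT.notMem_of_getD_lt_of_lt_getD_succ {α : Type*} [LinearOrder α] {l : List α}
    (hl : l.SortedLT) {k : ℕ} {x d : α} (h₁ : l.getD k d < x) (h₂ : x < l.getD (k + 1) d) :
    x ∉ l := by
  intro hx
  obtain ⟨m, hm, rfl⟩ := mem_iff_getElem.1 hx
  rcases lt_or_ge k l.length with hk | hk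
  · rw [getD_eq_getElem _ _ hk, hl.getElem_lt_getElem_iff] at h₁
    rcases lt_or_ge (k + 1) l.length with hk' | hk'
    · rw [getD_eq_getElem _ _ hk', hl.getElem_lt_getElem_iff] at h₂
      omega
    · omega
  · rw [getD_eq_default _ _ hk, getD_eq_default _ _ (by omega)] at *
    exact lt_asymm h₁ h₂

theorem filter_comp_swap_eq_map_swap {α : Type*} [DecidableEq α] {f : α → Bool} {a b : α}
    (hab : f a ≠ f b) {l₁ l₂ : List α} (h : ∀ x ∈ l₁ ++ l₂, x ≠ a ∧ x ≠ b) :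
    (l₁ ++ a :: b :: l₂).filter (f ∘ Equiv.swap a b) =
      ((l₁ ++ a :: b :: l₂).filter f).map (Equiv.swap a b) := by
  have fixed : ∀ l : List α, (∀ x ∈ l, x ≠ a ∧ x ≠ b) →
      l.filter (f ∘ Equiv.swap a b) = (l.filter f).map (Equiv.swap a b) := by
    intro l hl
    induction l with
    | nil => rfl
    | cons x l ih =>
      have hx := hl x mem_cons_self
      simp only [filter_cons, Function.comp_apply, Equiv.swap_apply_of_ne_of_ne hx.1 hx.2]
      split_ifs <;> simp [ih fun y hy => hl y (mem_cons_of_mem x hy),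
        Equiv.swap_apply_of_ne_of_ne hx.1 hx.2]
  have h₂ := fixed l₂ fun x hx => h x (mem_append_right _ hx)
  rw [filter_append, filter_append, map_append, fixed l₁ fun x hx => h x (mem_append_left _ hx)]
  congr 1
  cases ha : f a <;> cases hb : f b <;>
    simp_all [Equiv.swap_apply_left, Equiv.swap_apply_right]

theorem filter_range_comp_swap {f : ℕ → Bool} {p L : ℕ} (hL : p + 1 < L)
    (hf : f p ≠ f (p + 1)) :
    (range L).filter (f ∘ Equiv.swap p (p + 1)) =
      ((range L).filter f).map (Equiv.swap p (p + 1)) := by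
  obtain ⟨m, rfl⟩ : ∃ m, L = p + 2 + m := ⟨L - (p + 2), by omega⟩
  have hrange : range (p + 2 + m) = range p ++ p :: (p + 1) :: (range m).map (p + 2 + ·) := by
    simp [range_add, range_succ]
  rw [hrange]
  refine filter_comp_swap_eq_map_swap hf fun x hx => ?_
  simp only [mem_append, mem_range, mem_map] at hx
  rcases hx with hx | ⟨y, -, rfl⟩ <;> omega

theorem count_take_eq_length_filter_range {s : List Bool} {M : ℕ} (hM : M ≤ s.length)
    (b : Bool) : (s.take M).count b = ((range M).filter (fun p => s.getD p false = b)).length := by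
  induction M with
  | zero => simp
  | succ M ih =>
    have hM' : M < s.length := hM
    rw [take_add_one, getElem?_eq_getElem hM', range_succ, filter_append,
      count_append, length_append, ih hM'.le]
    by_cases h : s[M] = b <;> simp [h, getElem?_eq_getElem hM']

theorem filter_range_filter_lt {P : ℕ → Bool} {M L : ℕ} (h : M ≤ L) :
    ((range L).filter P).filter (· < M) = (range M).filter P := by
  obtain ⟨m, rfl⟩ : ∃ m, L = M + m := ⟨L - M, by omega⟩
  have below : ((range M).filter P).filter (· < M) = (range M).filter P :=
    filter_eq_self.2 fun x hx => by simpa using (mem_filter.1 hx).1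
  have above : (((range m).map (M + ·)).filter P).filter (· < M) = [] :=
    filter_eq_nil_iff.2 fun x hx => by
      obtain ⟨y, -, rfl⟩ := mem_map.1 (mem_filter.1 hx).1
      simp
  rw [range_add, filter_append, filter_append, below, above, append_nil]

end List

theorem swap_succ_lt_swap_succ_iff {e x y : ℕ} (hy : y ≠ e + 1) :
    Equiv.swap e (e + 1) x < Equiv.swap e (e + 1) y ↔ x < y ∨ (x = e + 1 ∧ y = e) := by
  simp only [Equiv.swap_apply_def]
  split_ifs <;> omega

theorem mem_Npos {s : List Bool} {p : ℕ} :
    p ∈ Npos s ↔ p < s.length ∧ s.getD p false = true := by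
  simp [Npos]

theorem mem_Epos {s : List Bool} {p : ℕ} :
    p ∈ Epos s ↔ p < s.length ∧ s.getD p false = false := by
  simp [Epos]

theorem mem_Npos_or_mem_Epos {s : List Bool} {p : ℕ} (h : p < s.length) :
    p ∈ Npos s ∨ p ∈ Epos s := by
  cases hp : s.getD p false
  · exact .inr (mem_Epos.2 ⟨h, hp⟩)
  · exact .inl (mem_Npos.2 ⟨h, hp⟩)

theorem notMem_Epos_of_mem_Npos {s : List Bool} {p : ℕ} (h : p ∈ Npos s) : p ∉ Epos s := by
  intro hE
  have hs := (mem_Epos.1 hE).2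
  rw [(mem_Npos.1 h).2] at hs
  exact absurd hs (by decide)

theorem sortedLT_Npos (s : List Bool) : (Npos s).SortedLT :=
  (List.pairwise_lt_range.filter _).sortedLT

theorem sortedLT_Epos (s : List Bool) : (Epos s).SortedLT :=
  (List.pairwise_lt_range.filter _).sortedLT

theorem count_take_eq_length_filter_Npos {s : List Bool} {M : ℕ} (hM : M ≤ s.length) :
    (s.take M).count true = ((Npos s).filter (· < M)).length := by
  rw [List.count_take_eq_length_filter_range hM, Npos, List.filter_range_filter_lt hM]

theorem count_take_eq_length_filter_Epos {s : List Bool} {M : ℕ} (hM : M ≤ s.length) :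
    (s.take M).count false = ((Epos s).filter (· < M)).length := by
  rw [List.count_take_eq_length_filter_range hM, Epos, List.filter_range_filter_lt hM]

-- The prefix of length `e + 1` contains `i + 1` East and `j` North steps.
theorem IsDyckWord.lt_of_valley {s : List Bool} (hs : IsDyckWord s) {i j e : ℕ}
    (hi : (Epos s)[i]? = some e) (hj : (Npos s)[j]? = some (e + 1)) : i < j := by
  obtain ⟨hiE, rfl⟩ := List.getElem?_eq_some_iff.1 hi
  obtain ⟨hjN, hNj⟩ := List.getElem?_eq_some_iff.1 hj
  have hM : (Epos s)[i] + 1 ≤ s.length := (mem_Epos.1 (List.getElem_mem hiE)).1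
  have hE : ((Epos s).filter (· < (Epos s)[i] + 1)).length = i + 1 :=
    List.length_filter_eq_of_forall_getElem hiE fun a ha => by
      simp [(sortedLT_Epos s).getElem_le_getElem_iff]
  have hN : ((Npos s).filter (· < (Epos s)[i] + 1)).length = j :=
    List.length_filter_eq_of_forall_getElem hjN.le fun a ha => by
      simp [← hNj, (sortedLT_Npos s).getElem_lt_getElem_iff]
  have hdyck := hs.2 ((Epos s)[i] + 1)
  rw [count_take_eq_length_filter_Npos hM, count_take_eq_length_filter_Epos hM, hE, hN] at hdyck
  omega

theorem exists_valley_of_mem_corners {s : List Bool} {n : ℕ} {c : Fin n × Fin n}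
    (hc : c ∈ corners s n) :
    ∃ e, 0 < e ∧ (Epos s)[(c.1 : ℕ)]? = some e ∧ (Npos s)[(c.2 : ℕ)]? = some (e + 1) := by
  simp only [corners, Finset.mem_filter, Finset.mem_univ, true_and] at hc
  obtain ⟨h_above, h_south, h_east⟩ := hc
  set i : ℕ := (c.1 : ℕ)
  set j : ℕ := (c.2 : ℕ)
  rcases hE : (Epos s)[i]? with _ | e
  · simp [List.getD_eq_getElem?_getD, hE] at h_south
  rcases hN : (Npos s)[j]? with _ | f
  · simp [List.getD_eq_getElem?_getD, hE, hN] at h_above h_south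
    omega
  have hEi : (Epos s).getD i 0 = e := by rw [List.getD_eq_getElem?_getD, hE, Option.getD_some]
  have hNj : (Npos s).getD j 0 = f := by rw [List.getD_eq_getElem?_getD, hN, Option.getD_some]
  have he : e ∈ Epos s := List.mem_of_getElem? hE
  have hf : f ∈ Npos s := List.mem_of_getElem? hN
  have hj : 1 ≤ j := by
    by_contra hj
    rw [show j - 1 = j by omega] at h_south
    exact h_above h_south
  have hfe : f ≠ e := fun h => notMem_Epos_of_mem_Npos hf (h ▸ he)
  refine ⟨e, by omega, rfl, ?_⟩
  by_contra hf1
  have hf1 : e + 1 < f := by simp at hf1; omega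
  rcases mem_Npos_or_mem_Epos (lt_trans hf1 (mem_Npos.1 hf).1) with h | h
  · refine (sortedLT_Npos s).notMem_of_getD_lt_of_lt_getD_succ (k := j - 1) (d := 0) ?_ ?_ h
    · omega
    · rw [Nat.sub_add_cancel hj]; omega
  · exact (sortedLT_Epos s).notMem_of_getD_lt_of_lt_getD_succ (k := i) (d := 0)
      (by omega) (by omega) h

section Flip

variable {s : List Bool} {i e : ℕ}

theorem length_flipAt : (flipAt s i).length = s.length := by
  simp [flipAt]

theorem getD_flipAt (hi : (Epos s)[i]? = some e) (hN : e + 1 ∈ Npos s) (x : ℕ) :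
    (flipAt s i).getD x false = s.getD (Equiv.swap e (e + 1) x) false := by
  have hE := mem_Epos.1 (List.mem_of_getElem? hi)
  have hN := mem_Npos.1 hN
  have hEi : (Epos s).getD i 0 = e := by rw [List.getD_eq_getElem?_getD, hi, Option.getD_some]
  rw [flipAt, hEi, List.getD_eq_getElem?_getD, List.getElem?_set, List.getElem?_set,
    List.length_set, Equiv.swap_apply_def]
  simp only [List.getD_eq_getElem?_getD] at hE hN ⊢
  split_ifs <;> first | omega | (subst x; simp [hE.2, hN.2]) | rfl

theorem Npos_flipAt (hi : (Epos s)[i]? = some e) (hN : e + 1 ∈ Npos s) :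
    Npos (flipAt s i) = (Npos s).map (Equiv.swap e (e + 1)) := by
  have hf : (fun p => decide ((flipAt s i).getD p false = true)) =
      (fun p => decide (s.getD p false = true)) ∘ Equiv.swap e (e + 1) :=
    funext fun x => by rw [Function.comp_apply, getD_flipAt hi hN]
  rw [Npos, Npos, length_flipAt, hf]
  exact List.filter_range_comp_swap (mem_Npos.1 hN).1
    (by rw [(mem_Epos.1 (List.mem_of_getElem? hi)).2, (mem_Npos.1 hN).2]; decide)

theorem Epos_flipAt (hi : (Epos s)[i]? = some e) (hN : e + 1 ∈ Npos s) :
    Epos (flipAt s i) = (Epos s).map (Equiv.swap e (e + 1)) := by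
  have hf : (fun p => decide ((flipAt s i).getD p false = false)) =
      (fun p => decide (s.getD p false = false)) ∘ Equiv.swap e (e + 1) :=
    funext fun x => by rw [Function.comp_apply, getD_flipAt hi hN]
  rw [Epos, Epos, length_flipAt, hf]
  exact List.filter_range_comp_swap (mem_Npos.1 hN).1
    (by rw [(mem_Epos.1 (List.mem_of_getElem? hi)).2, (mem_Npos.1 hN).2]; decide)

theorem getD_Npos_flipAt_lt_getD_Epos_flipAt_iff {j : ℕ} (he0 : 0 < e)
    (hi : (Epos s)[i]? = some e) (hj : (Npos s)[j]? = some (e + 1)) (a b : ℕ) :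
    (Npos (flipAt s i)).getD a 0 < (Epos (flipAt s i)).getD b 0 ↔
      (Npos s).getD a 0 < (Epos s).getD b 0 ∨ (a = j ∧ b = i) := by
  have hN : e + 1 ∈ Npos s := List.mem_of_getElem? hj
  have getD_map_swap (l : List ℕ) (k : ℕ) :
      (l.map (Equiv.swap e (e + 1))).getD k 0 = Equiv.swap e (e + 1) (l.getD k 0) := by
    simpa [Equiv.swap_apply_of_ne_of_ne (by omega : 0 ≠ e) (by omega : 0 ≠ e + 1)] using
      List.getD_map (l := l) (n := k) (d := 0) (Equiv.swap e (e + 1))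
  rw [Npos_flipAt hi hN, Epos_flipAt hi hN, getD_map_swap, getD_map_swap,
    swap_succ_lt_swap_succ_iff
      (List.getD_ne_of_notMem (notMem_Epos_of_mem_Npos hN) (by omega) b),
    (sortedLT_Npos s).nodup.getD_eq_iff hj (by omega),
    (sortedLT_Epos s).nodup.getD_eq_iff hi (by omega)]

end Flip

theorem area_flipAt {s : List Bool} (hs : IsDyckWord s) {n : ℕ} {c : Fin n × Fin n}
    (hc : c ∈ corners s n) : area (flipAt s c.1) n = insert c (area s n) := by
  obtain ⟨e, he0, hi, hj⟩ := exists_valley_of_mem_corners hc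
  have hij := hs.lt_of_valley hi hj
  ext p
  simp only [area, Finset.mem_filter, Finset.mem_univ, true_and, Finset.mem_insert,
    getD_Npos_flipAt_lt_getD_Epos_flipAt_iff he0 hi hj, Prod.ext_iff, Fin.ext_iff]
  omega

theorem corners_flipAt_inter {s : List Bool} {n : ℕ} {c : Fin n × Fin n}
    (hc : c ∈ corners s n) :
    corners (flipAt s c.1) n ∩ corners s n = (corners s n).erase c := by
  obtain ⟨e, he0, hi, hj⟩ := exists_valley_of_mem_corners hc
  ext p
  simp only [corners, Finset.mem_inter, Finset.mem_erase, Finset.mem_filter, Finset.mem_univ,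
    true_and, getD_Npos_flipAt_lt_getD_Epos_flipAt_iff he0 hi hj, ne_eq, Prod.ext_iff, Fin.ext_iff]
  omega

theorem notMem_area_of_mem_corners {s : List Bool} {n : ℕ} {c : Fin n × Fin n}
    (hc : c ∈ corners s n) : c ∉ area s n := by
  simp only [corners, area, Finset.mem_filter, Finset.mem_univ, true_and] at hc ⊢
  exact fun h => hc.1 h.2

theorem q_ne_one : q ≠ 1 := by
  intro h
  have hdeg := RatFunc.intDegree_X (K := ℚ)
  rw [← q, h, RatFunc.intDegree_one] at hdeg
  exact absurd hdeg (by decide)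

theorem chiwt_summand_corner_split {ι α : Type*} [DecidableEq ι] [LinearOrder α]
    {A B B' : Finset (ι × ι)} {c : ι × ι} (hcA : c ∉ A) (hcB : c ∈ B)
    (hB' : B' ∩ B = B.erase c) (wt : ι × ι → K) (f : ι → α) :
    q ^ (A.filter fun p => f p.1 > f p.2).card *
        ∏ p ∈ B.filter (fun p => f p.1 ≤ f p.2), wt p =
      (q * wt c - 1) / (q - 1) * (q ^ (A.filter fun p => f p.1 > f p.2).card *
        ∏ p ∈ B.filter (fun p => f p.1 ≤ f p.2), Function.update wt c 1 p) +
      (1 - wt c) / (q - 1) * (q ^ ((insert c A).filter fun p => f p.1 > f p.2).card *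
        ∏ p ∈ B'.filter (fun p => f p.1 ≤ f p.2), if p ∈ B then wt p else 1) := by
  set rest := (B.erase c).filter (fun p => f p.1 ≤ f p.2)
  have hc_rest : c ∉ rest := fun h => (Finset.mem_erase.1 (Finset.mem_filter.1 h).1).1 rfl
  have prod_B' : ∏ p ∈ B'.filter (fun p => f p.1 ≤ f p.2), (if p ∈ B then wt p else 1) =
      ∏ p ∈ rest, wt p := by
    rw [← Finset.prod_filter, Finset.filter_comm, Finset.filter_mem_eq_inter, hB']
  have prod_update : ∏ p ∈ rest, Function.update wt c 1 p = ∏ p ∈ rest, wt p :=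
    Finset.prod_congr rfl fun p hp => Function.update_of_ne (ne_of_mem_of_not_mem hp hc_rest) _ _
  have hq : q - 1 ≠ 0 := sub_ne_zero.2 q_ne_one
  rw [prod_B', ← Finset.insert_erase hcB, Finset.filter_insert, Finset.filter_insert]
  by_cases hle : f c.1 ≤ f c.2
  · rw [if_pos hle, if_neg (not_lt.2 hle), Finset.prod_insert hc_rest,
      Finset.prod_insert hc_rest, prod_update, Function.update_self]
    field_simp
    ring
  · rw [if_neg hle, if_pos (not_le.1 hle), prod_update,
      Finset.card_insert_of_notMem fun h => hcA (Finset.mem_filter.1 h).1, pow_succ]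
    field_simp
    ring

theorem chiwt_eq_of_insert_area {n : ℕ} {A Cn Cn' : Finset (Fin n × Fin n)} {c : Fin n × Fin n}
    (hcA : c ∉ A) (hcC : c ∈ Cn) (hC' : Cn' ∩ Cn = Cn.erase c) (wt : Fin n × Fin n → K) :
    chiwt A Cn wt =
      MvPowerSeries.C (σ := ℕ+) (R := K) ((q * wt c - 1) / (q - 1)) *
        chiwt A Cn (Function.update wt c 1) +
      MvPowerSeries.C (σ := ℕ+) (R := K) ((1 - wt c) / (q - 1)) *
        chiwt (insert c A) Cn' (fun p => if p ∈ Cn then wt p else 1) := by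
  ext d
  rw [map_add, MvPowerSeries.coeff_C_mul, MvPowerSeries.coeff_C_mul]
  simp only [MvPowerSeries.coeff_apply, chiwt, Finset.mul_sum, ← Finset.sum_add_distrib]
  refine Finset.sum_congr rfl fun w _ => ?_
  split_ifs
  · exact chiwt_summand_corner_split hcA hcC hC' wt fun i => (w i : ℕ+)
  · simp

theorem chiwt_corner_flip_general (s : List Bool) (n : ℕ)
    (hs : IsDyckWord s)
    (c₀ : Fin n × Fin n) (hc : c₀ ∈ corners s n)
    (wt : Fin n × Fin n → K) :
    chiwt (area s n) (corners s n) wt =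
      MvPowerSeries.C (σ := ℕ+) (R := K) ((q * wt c₀ - 1) / (q - 1)) *
        chiwt (area s n) (corners s n) (Function.update wt c₀ 1) +
      MvPowerSeries.C (σ := ℕ+) (R := K) ((1 - wt c₀) / (q - 1)) *
        chiwt (area (flipAt s c₀.1) n) (corners (flipAt s c₀.1) n)
          (fun p => if p ∈ corners s n then wt p else 1) := by
  rw [area_flipAt hs hc]
  exact chiwt_eq_of_insert_area (notMem_area_of_mem_corners hc) hc (corners_flipAt_inter hc) wt

theorem chiwt_corner_flip (s : List Bool) (n : ℕ)
    (hs : IsDyckWord s) (hn : s.count true = n)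
    (c₀ : Fin n × Fin n) (hc : c₀ ∈ corners s n)
    (wt : Fin n × Fin n → K) :
    chiwt (area s n) (corners s n) wt =
      MvPowerSeries.C (σ := ℕ+) (R := K) ((q * wt c₀ - 1) / (q - 1)) *
        chiwt (area s n) (corners s n) (Function.update wt c₀ 1) +
      MvPowerSeries.C (σ := ℕ+) (R := K) ((1 - wt c₀) / (q - 1)) *
        chiwt (area (flipAt s c₀.1) n) (corners (flipAt s c₀.1) n)
          (fun p => if p ∈ corners s n then wt p else 1) :=
  chiwt_corner_flip_general s n hs c₀ hc wt
end
end

section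
/- In the Dyck path algebra A_q, the elements y_i ∈ e_k A_q e_k satisfy y_i T_j = T_j y_i whenever i ∉ {j, j+1}, and y_i d_− = d_− y_i, and d_+ y_i = T_1 T_2 ⋯ T_i · y_i · (T_1 T_2 ⋯ T_i)^{-1} · d_+. -/
/-!
By the quadratic relation each `T_i` is invertible, `T_i⁻¹ = q⁻¹ T_i + (1 - q⁻¹)`, and the braid
relation survives passing to inverses, e.g. `T_i T_{i+1}⁻¹ T_i⁻¹ = T_{i+1}⁻¹ T_i⁻¹ T_{i+1}`.
All three relations are proved by induction on `i` along `y_{i+1} = q T_i⁻¹ y_i T_i⁻¹`.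
For `y_1`, `T_{j+1}` passes through `d₊d₋ - d₋d₊` as `T_j`, and
`T_j T_{k-1}⋯T_1 = T_{k-1}⋯T_1 T_{j+1}` by the braid relation; once `d₋` (resp. `d₊`) is moved
through `T_{k-1}⋯T_1`, the claims for `y_1` are the two defining relations of `A_q` involving
`d₊d₋ - d₋d₊`, the factor `q` they produce being absorbed by the normalisation `q^{k-1}`.
In the inductive step `T_i⁻¹` commutes with `d₋` and becomes `T_{i+1}⁻¹` across `d₊`, and the braid
relation moves `T_{i+1}⁻¹` past `T_i⁻¹` (for `y_{i+2} T_i`) and past `T_1⋯T_i` (for `d₊ y_{i+1}`).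
-/

noncomputable section

section Hecke

variable {F M N : Type*} [Field F] [AddCommGroup M] [Module F M] [AddCommGroup N] [Module F N]

def heckeInv (q : F) (t : Module.End F M) : Module.End F M :=
  q⁻¹ • t + (1 - q⁻¹) • LinearMap.id

theorem Function.Semiconj.heckeInv {f : M →ₗ[F] N} {a : Module.End F M} {b : Module.End F N}
    (h : Function.Semiconj f a b) (q : F) :
    Function.Semiconj f (_root_.heckeInv q a) (_root_.heckeInv q b) := fun v => by
  simp only [_root_.heckeInv, LinearMap.add_apply, LinearMap.smul_apply, LinearMap.id_apply,
    map_add, map_smul, h.eq]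

variable {q : F} {t u : Module.End F M}

theorem heckeInv_leftInverse (hq : q ≠ 0) (ht : t ∘ₗ t = (1 - q) • t + q • LinearMap.id) :
    Function.LeftInverse (heckeInv q t) t := fun v => by
  have htt : t (t v) = (1 - q) • t v + q • v := LinearMap.congr_fun ht v
  simp only [heckeInv, LinearMap.add_apply, LinearMap.smul_apply, LinearMap.id_apply, htt]
  rw [smul_add, smul_smul, smul_smul, inv_mul_cancel₀ hq, one_smul, add_right_comm, ← add_smul,
    mul_one_sub, inv_mul_cancel₀ hq, sub_add_sub_cancel, sub_self, zero_smul, zero_add]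

theorem heckeInv_rightInverse (hq : q ≠ 0) (ht : t ∘ₗ t = (1 - q) • t + q • LinearMap.id) :
    Function.RightInverse (heckeInv q t) t := fun v => by
  rw [((Function.Commute.refl t).heckeInv q).eq, heckeInv_leftInverse hq ht]

theorem apply_heckeInv_heckeInv_of_braid (hq : q ≠ 0)
    (ht : t ∘ₗ t = (1 - q) • t + q • LinearMap.id) (hu : u ∘ₗ u = (1 - q) • u + q • LinearMap.id)
    (htu : t ∘ₗ u ∘ₗ t = u ∘ₗ t ∘ₗ u) (v : M) :
    t (heckeInv q u (heckeInv q t v)) = heckeInv q u (heckeInv q t (u v)) := by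
  have braid (w : M) : t (u (t w)) = u (t (u w)) := LinearMap.congr_fun htu w
  apply (heckeInv_leftInverse hq hu).injective
  apply (heckeInv_leftInverse hq ht).injective
  rw [braid]
  simp only [heckeInv_rightInverse hq ht _, heckeInv_rightInverse hq hu _]

theorem heckeInv_apply_of_braid (hq : q ≠ 0)
    (ht : t ∘ₗ t = (1 - q) • t + q • LinearMap.id) (hu : u ∘ₗ u = (1 - q) • u + q • LinearMap.id)
    (htu : t ∘ₗ u ∘ₗ t = u ∘ₗ t ∘ₗ u) (v : M) :
    heckeInv q u (t v) = t (u (heckeInv q t (heckeInv q u v))) := by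
  have braid (w : M) : t (u (t w)) = u (t (u w)) := LinearMap.congr_fun htu w
  apply (heckeInv_leftInverse hq hu).injective
  rw [heckeInv_rightInverse hq hu, ← braid, heckeInv_rightInverse hq ht,
    heckeInv_rightInverse hq hu]

theorem heckeInv_heckeInv_of_braid (hq : q ≠ 0)
    (ht : t ∘ₗ t = (1 - q) • t + q • LinearMap.id) (hu : u ∘ₗ u = (1 - q) • u + q • LinearMap.id)
    (htu : t ∘ₗ u ∘ₗ t = u ∘ₗ t ∘ₗ u) (v : M) :
    heckeInv q t (heckeInv q u v) =
      u (heckeInv q t (heckeInv q u (heckeInv q t v))) := by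
  have braid (w : M) : t (u (t w)) = u (t (u w)) := LinearMap.congr_fun htu w
  apply (heckeInv_leftInverse hq ht).injective
  apply (heckeInv_leftInverse hq hu).injective
  rw [← braid]
  simp only [heckeInv_rightInverse hq ht _, heckeInv_rightInverse hq hu _]

/-- `descProd a n = a n ∘ ⋯ ∘ a 1` and `ascProd a n = a 1 ∘ ⋯ ∘ a n`. -/
def descProd (a : ℕ → Module.End F M) (n : ℕ) : Module.End F M :=
  (List.range n).foldr (fun i f => f ∘ₗ a (i + 1)) LinearMap.id

def ascProd (a : ℕ → Module.End F M) (n : ℕ) : Module.End F M :=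
  (List.range n).foldr (fun i f => a (i + 1) ∘ₗ f) LinearMap.id

theorem foldr_comp_eq_comp_foldr (a : ℕ → Module.End F M) (g : Module.End F M) (l : List ℕ) :
    l.foldr (fun i f => f ∘ₗ a i) g = g ∘ₗ l.foldr (fun i f => f ∘ₗ a i) LinearMap.id := by
  induction l with
  | nil => rfl
  | cons i l ih => simp only [List.foldr_cons, ih, LinearMap.comp_assoc]

theorem foldr_comp_eq_foldr_comp (a : ℕ → Module.End F M) (g : Module.End F M) (l : List ℕ) :
    l.foldr (fun i f => a i ∘ₗ f) g = l.foldr (fun i f => a i ∘ₗ f) LinearMap.id ∘ₗ g := by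
  induction l with
  | nil => rfl
  | cons i l ih => simp only [List.foldr_cons, ih, LinearMap.comp_assoc]

theorem descProd_zero_apply (a : ℕ → Module.End F M) (v : M) : descProd a 0 v = v := rfl

theorem ascProd_zero_apply (a : ℕ → Module.End F M) (v : M) : ascProd a 0 v = v := rfl

theorem descProd_succ_apply (a : ℕ → Module.End F M) (n : ℕ) (v : M) :
    descProd a (n + 1) v = a (n + 1) (descProd a n v) := by
  rw [descProd, List.range_succ, List.foldr_append, foldr_comp_eq_comp_foldr (fun i => a (i + 1))]
  rfl

theorem ascProd_succ_apply (a : ℕ → Module.End F M) (n : ℕ) (v : M) :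
    ascProd a (n + 1) v = ascProd a n (a (n + 1) v) := by
  rw [ascProd, List.range_succ, List.foldr_append, foldr_comp_eq_foldr_comp (fun i => a (i + 1))]
  rfl

theorem Function.Semiconj.descProd {f : M →ₗ[F] N} {a : ℕ → Module.End F M}
    {b : ℕ → Module.End F N} {n : ℕ} (h : ∀ i, 1 ≤ i → i ≤ n → Function.Semiconj f (a i) (b i)) :
    Function.Semiconj f (_root_.descProd a n) (_root_.descProd b n) := by
  induction n with
  | zero => exact Function.Semiconj.id_right
  | succ n ih =>
    intro v
    rw [descProd_succ_apply, descProd_succ_apply, (h (n + 1) (by omega) le_rfl).eq,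
      ih (fun i hi hin => h i hi (by omega))]

theorem Function.Semiconj.ascProd {f : M →ₗ[F] N} {a : ℕ → Module.End F M}
    {b : ℕ → Module.End F N} {n : ℕ} (h : ∀ i, 1 ≤ i → i ≤ n → Function.Semiconj f (a i) (b i)) :
    Function.Semiconj f (_root_.ascProd a n) (_root_.ascProd b n) := by
  induction n with
  | zero => exact Function.Semiconj.id_right
  | succ n ih =>
    intro v
    rw [ascProd_succ_apply, ascProd_succ_apply, ih (fun i hi hin => h i hi (by omega)),
      (h (n + 1) (by omega) le_rfl).eq]

end Hecke

theorem q_ne_zero : q ≠ 0 := RatFunc.X_ne_zero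

theorem inv_pow_succ_mul_mul_self {F : Type*} [Field F] {q : F} (hq : q ≠ 0) (c : F) (m : ℕ) :
    (q ^ (m + 1) * c)⁻¹ * q = (q ^ m * c)⁻¹ := by
  rw [pow_succ, mul_right_comm, mul_inv, inv_mul_cancel_right₀ hq]

structure DyckPathRep (V : ℕ → Type) [∀ k, AddCommGroup (V k)] [∀ k, Module K (V k)] where
  T : ∀ k : ℕ, ℕ → Module.End K (V k)
  dp : ∀ k : ℕ, V k →ₗ[K] V (k + 1)
  dm : ∀ k : ℕ, V (k + 1) →ₗ[K] V k
  quad : ∀ k i, 1 ≤ i → i + 1 ≤ k →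
    (T k i) ∘ₗ (T k i) = (1 - q) • T k i + q • LinearMap.id
  braid : ∀ k i, 1 ≤ i → i + 2 ≤ k →
    (T k i) ∘ₗ (T k (i + 1)) ∘ₗ (T k i) = (T k (i + 1)) ∘ₗ (T k i) ∘ₗ (T k (i + 1))
  comm : ∀ k i j, 1 ≤ i → i + 1 ≤ k → 1 ≤ j → j + 1 ≤ k → i + 1 < j →
    (T k i) ∘ₗ (T k j) = (T k j) ∘ₗ (T k i)
  T_dm : ∀ k i, 1 ≤ i → i + 1 ≤ k →
    (T k i) ∘ₗ (dm k) = (dm k) ∘ₗ (T (k + 1) i)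
  dp_T : ∀ k i, 1 ≤ i → i + 1 ≤ k →
    (dp k) ∘ₗ (T k i) = (T (k + 1) (i + 1)) ∘ₗ (dp k)
  dm_bracket_T : ∀ k, (dm (k + 1)) ∘ₗ
      ((dp (k + 1)) ∘ₗ (dm (k + 1)) - (dm (k + 2)) ∘ₗ (dp (k + 2))) ∘ₗ
        (T (k + 2) (k + 1)) =
    q • (((dp k) ∘ₗ (dm k) - (dm (k + 1)) ∘ₗ (dp (k + 1))) ∘ₗ (dm (k + 1)))
  T_bracket_dp : ∀ k, (T (k + 2) 1) ∘ₗ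
      ((dp (k + 1)) ∘ₗ (dm (k + 1)) - (dm (k + 2)) ∘ₗ (dp (k + 2))) ∘ₗ (dp (k + 1)) =
    q • ((dp (k + 1)) ∘ₗ ((dp k) ∘ₗ (dm k) - (dm (k + 1)) ∘ₗ (dp (k + 1))))

namespace DyckPathRep

variable {V : ℕ → Type} [∀ k, AddCommGroup (V k)] [∀ k, Module K (V k)] (C : DyckPathRep V)

def S (k i : ℕ) : Module.End K (V k) := heckeInv q (C.T k i)

def bracket (k : ℕ) : Module.End K (V (k + 1)) :=
  C.dp k ∘ₗ C.dm k - C.dm (k + 1) ∘ₗ C.dp (k + 1)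

variable {C} {k i j : ℕ}

theorem S_T (hi : 1 ≤ i) (hik : i + 1 ≤ k) : Function.LeftInverse (C.S k i) (C.T k i) :=
  heckeInv_leftInverse q_ne_zero (C.quad k i hi hik)

theorem T_S (hi : 1 ≤ i) (hik : i + 1 ≤ k) : Function.RightInverse (C.S k i) (C.T k i) :=
  heckeInv_rightInverse q_ne_zero (C.quad k i hi hik)

theorem T_braid_apply (hi : 1 ≤ i) (hik : i + 2 ≤ k) (v : V k) :
    C.T k i (C.T k (i + 1) (C.T k i v)) = C.T k (i + 1) (C.T k i (C.T k (i + 1) v)) :=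
  LinearMap.congr_fun (C.braid k i hi hik) v

theorem T_S_succ_S (hi : 1 ≤ i) (hik : i + 2 ≤ k) (v : V k) :
    C.T k i (C.S k (i + 1) (C.S k i v)) = C.S k (i + 1) (C.S k i (C.T k (i + 1) v)) :=
  apply_heckeInv_heckeInv_of_braid q_ne_zero (C.quad k i hi (by omega))
    (C.quad k (i + 1) (by omega) hik) (C.braid k i hi hik) v

theorem T_succ_S_S_succ (hi : 1 ≤ i) (hik : i + 2 ≤ k) (v : V k) :
    C.T k (i + 1) (C.S k i (C.S k (i + 1) v)) = C.S k i (C.S k (i + 1) (C.T k i v)) :=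
  apply_heckeInv_heckeInv_of_braid q_ne_zero (C.quad k (i + 1) (by omega) hik)
    (C.quad k i hi (by omega)) (C.braid k i hi hik).symm v

theorem T_commute (hi : 1 ≤ i) (hik : i + 1 ≤ k) (hj : 1 ≤ j) (hjk : j + 1 ≤ k)
    (hij : i + 1 < j ∨ j + 1 < i) : Function.Commute (C.T k i) (C.T k j) := by
  rcases hij with hij | hji
  · exact LinearMap.congr_fun (C.comm k i j hi hik hj hjk hij)
  · exact Function.Commute.symm (LinearMap.congr_fun (C.comm k j i hj hjk hi hik hji))

theorem T_S_commute (hi : 1 ≤ i) (hik : i + 1 ≤ k) (hj : 1 ≤ j) (hjk : j + 1 ≤ k)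
    (hij : i + 1 < j ∨ j + 1 < i) : Function.Commute (C.T k i) (C.S k j) :=
  (C.T_commute hi hik hj hjk hij).heckeInv q

theorem S_commute (hi : 1 ≤ i) (hik : i + 1 ≤ k) (hj : 1 ≤ j) (hjk : j + 1 ≤ k)
    (hij : i + 1 < j ∨ j + 1 < i) : Function.Commute (C.S k i) (C.S k j) :=
  Function.Semiconj.heckeInv (C.T_S_commute hj hjk hi hik hij.symm).symm q

theorem dm_semiconj (hi : 1 ≤ i) (hik : i + 1 ≤ k) :
    Function.Semiconj (C.dm k) (C.T (k + 1) i) (C.T k i) :=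
  fun v => (LinearMap.congr_fun (C.T_dm k i hi hik) v).symm

theorem dp_semiconj (hi : 1 ≤ i) (hik : i + 1 ≤ k) :
    Function.Semiconj (C.dp k) (C.T k i) (C.T (k + 1) (i + 1)) :=
  LinearMap.congr_fun (C.dp_T k i hi hik)

theorem dm_semiconj_S (hi : 1 ≤ i) (hik : i + 1 ≤ k) :
    Function.Semiconj (C.dm k) (C.S (k + 1) i) (C.S k i) :=
  (C.dm_semiconj hi hik).heckeInv q

theorem dp_semiconj_S (hi : 1 ≤ i) (hik : i + 1 ≤ k) :
    Function.Semiconj (C.dp k) (C.S k i) (C.S (k + 1) (i + 1)) :=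
  (C.dp_semiconj hi hik).heckeInv q

theorem bracket_semiconj (hj : 1 ≤ j) (hjk : j + 1 ≤ k) :
    Function.Semiconj (C.bracket k) (C.T (k + 1) j) (C.T (k + 1) (j + 1)) := fun v => by
  simp only [bracket, LinearMap.sub_apply, LinearMap.comp_apply, map_sub]
  rw [(C.dm_semiconj hj hjk).eq, (C.dp_semiconj hj hjk).eq,
    (C.dp_semiconj hj (by omega)).eq, (C.dm_semiconj (by omega) (by omega)).eq]

theorem dm_bracket_T_apply (k : ℕ) (v : V (k + 2)) :
    C.dm (k + 1) (C.bracket (k + 1) (C.T (k + 2) (k + 1) v)) = q • C.bracket k (C.dm (k + 1) v) :=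
  LinearMap.congr_fun (C.dm_bracket_T k) v

theorem T_bracket_dp_apply (k : ℕ) (v : V (k + 1)) :
    C.T (k + 2) 1 (C.bracket (k + 1) (C.dp (k + 1) v)) = q • C.dp (k + 1) (C.bracket k v) :=
  LinearMap.congr_fun (C.T_bracket_dp k) v

theorem T_descProd (hj : 1 ≤ j) {n : ℕ} (hjn : j + 1 ≤ n) (hnk : n + 1 ≤ k) (v : V k) :
    C.T k j (descProd (C.T k) n v) = descProd (C.T k) n (C.T k (j + 1) v) := by
  obtain ⟨j, rfl⟩ : ∃ j', j = j' + 1 := ⟨j - 1, by omega⟩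
  induction n with
  | zero => omega
  | succ n ih =>
    rw [descProd_succ_apply, descProd_succ_apply]
    rcases Nat.lt_or_ge (j + 1) n with hjn' | hjn'
    · rw [C.T_commute hj (by omega) (by omega) hnk (.inl (by omega)), ih (by omega) (by omega)]
    · obtain rfl : n = j + 1 := by omega
      have hfar : Function.Commute (C.T k (j + 2)) (descProd (C.T k) j) :=
        Function.Semiconj.descProd fun i hi hij =>
          C.T_commute (by omega) hnk hi (by omega) (.inr (by omega))
      rw [descProd_succ_apply, descProd_succ_apply, C.T_braid_apply hj hnk, hfar.eq]

theorem descProd_S_dp {n : ℕ} (hnk : n + 1 ≤ k) (v : V k) :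
    descProd (C.T (k + 1)) (n + 1) (C.S (k + 1) 1 (C.dp k v)) = C.dp k (descProd (C.T k) n v) := by
  induction n with
  | zero => exact C.T_S le_rfl (by omega) _
  | succ n ih =>
    rw [descProd_succ_apply, ih (by omega), ← (C.dp_semiconj (by omega) hnk).eq,
      descProd_succ_apply]

theorem S_ascProd (hi : 1 ≤ i) (hik : i + 2 ≤ k) (v : V k) :
    C.S k (i + 1) (ascProd (C.T k) i v) =
      ascProd (C.T k) i (C.T k (i + 1) (C.S k i (C.S k (i + 1) v))) := by
  obtain ⟨i, rfl⟩ : ∃ i', i = i' + 1 := ⟨i - 1, by omega⟩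
  have hfar : Function.Semiconj (C.S k (i + 2)) (ascProd (C.T k) i) (ascProd (C.T k) i) :=
    Function.Semiconj.ascProd fun j hj hji =>
      (C.T_S_commute hj (by omega) (by omega) (by omega) (.inl (by omega))).symm
  rw [ascProd_succ_apply, ascProd_succ_apply, hfar.eq]
  exact congrArg _ <| heckeInv_apply_of_braid q_ne_zero (C.quad k (i + 1) hi (by omega))
      (C.quad k (i + 2) (by omega) (by omega)) (C.braid k (i + 1) hi hik) v

theorem descProd_S (hi : 1 ≤ i) (hik : i + 2 ≤ k) (v : V k) :
    descProd (C.S k) i (C.S k (i + 1) v) =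
      C.T k (i + 1) (C.S k i (C.S k (i + 1) (descProd (C.S k) i v))) := by
  obtain ⟨i, rfl⟩ : ∃ i', i = i' + 1 := ⟨i - 1, by omega⟩
  have hfar : Function.Commute (C.S k (i + 2)) (descProd (C.S k) i) :=
    Function.Semiconj.descProd fun j hj hji =>
      C.S_commute (by omega) (by omega) hj (by omega) (.inr (by omega))
  rw [descProd_succ_apply, descProd_succ_apply, ← hfar.eq]
  exact heckeInv_heckeInv_of_braid q_ne_zero (C.quad k (i + 1) hi (by omega))
    (C.quad k (i + 2) (by omega) (by omega)) (C.braid k (i + 1) hi hik) _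

structure IsYFamily (C : DyckPathRep V) (Y : ∀ m : ℕ, ℕ → Module.End K (V m)) : Prop where
  one : ∀ m v, Y (m + 1) 1 v = (q ^ m * (q - 1))⁻¹ • C.bracket m (descProd (C.T (m + 1)) m v)
  succ : ∀ m i, 1 ≤ i → i ≤ m → ∀ v,
    Y (m + 1) (i + 1) v = q • C.S (m + 1) i (Y (m + 1) i (C.S (m + 1) i v))

namespace IsYFamily

variable {Y : ∀ m : ℕ, ℕ → Module.End K (V m)} {m : ℕ}

theorem one_T_comm (hY : C.IsYFamily Y) (hj : 1 ≤ j) (hjm : j + 2 ≤ m + 1) (v : V (m + 1)) :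
    Y (m + 1) 1 (C.T (m + 1) (j + 1) v) = C.T (m + 1) (j + 1) (Y (m + 1) 1 v) := by
  rw [hY.one, hY.one, map_smul, ← (C.bracket_semiconj hj (by omega)).eq,
    C.T_descProd hj (by omega) le_rfl]

theorem T_comm (hY : C.IsYFamily Y) (hi : 1 ≤ i) (him : i ≤ m + 1) (hj : 1 ≤ j)
    (hjm : j + 1 ≤ m + 1) (hij : i ≠ j) (hij' : i ≠ j + 1) (v : V (m + 1)) :
    Y (m + 1) i (C.T (m + 1) j v) = C.T (m + 1) j (Y (m + 1) i v) := by
  induction i using Nat.strong_induction_on generalizing j v with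
  | _ i ih =>
  rcases i with _ | _ | i
  · omega
  · obtain ⟨j, rfl⟩ : ∃ j', j = j' + 1 := ⟨j - 1, by omega⟩
    exact hY.one_T_comm (by omega) (by omega) v
  rw [hY.succ m (i + 1) (by omega) (by omega), hY.succ m (i + 1) (by omega) (by omega), map_smul]
  congr 1
  by_cases hji : j = i
  · subst hji
    rw [hY.succ m j hj (by omega), hY.succ m j hj (by omega)]
    simp only [map_smul]
    congr 1
    rw [← C.T_succ_S_S_succ hj (by omega), ih j (by omega) hj (by omega) (by omega) (by omega)
      (by omega) (by omega), ← C.T_S_succ_S hj (by omega)]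
  · have hS : Function.Commute (C.T (m + 1) j) (C.S (m + 1) (i + 1)) :=
      C.T_S_commute hj hjm (by omega) (by omega) (by omega)
    rw [← hS.eq, ih (i + 1) (by omega) (by omega) (by omega) hj hjm (by omega) (by omega),
      ← hS.eq]

theorem dm_comm (hY : C.IsYFamily Y) (hi : 1 ≤ i) (him : i ≤ m + 1) (v : V (m + 2)) :
    Y (m + 1) i (C.dm (m + 1) v) = C.dm (m + 1) (Y (m + 2) i v) := by
  induction i generalizing v with
  | zero => omega
  | succ i ih =>
    rcases Nat.eq_zero_or_pos i with rfl | hi'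
    · have hP : Function.Semiconj (C.dm (m + 1)) (descProd (C.T (m + 2)) m)
          (descProd (C.T (m + 1)) m) :=
        Function.Semiconj.descProd fun j hj hjm => C.dm_semiconj hj (by omega)
      rw [hY.one m, hY.one (m + 1), map_smul, descProd_succ_apply, C.dm_bracket_T_apply,
        ← hP.eq, smul_smul, inv_pow_succ_mul_mul_self q_ne_zero]
    · have hS := C.dm_semiconj_S (k := m + 1) hi' (by omega)
      rw [hY.succ m i hi' (by omega), hY.succ (m + 1) i hi' (by omega), map_smul, ← hS.eq,
        ih hi' (by omega), hS.eq]

theorem dp_apply (hY : C.IsYFamily Y) (hi : 1 ≤ i) (him : i ≤ m + 1) (v : V (m + 1)) :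
    C.dp (m + 1) (Y (m + 1) i v) =
      ascProd (C.T (m + 2)) i (Y (m + 2) i (descProd (C.S (m + 2)) i (C.dp (m + 1) v))) := by
  induction i generalizing v with
  | zero => omega
  | succ i ih =>
    rcases Nat.eq_zero_or_pos i with rfl | hi'
    · rw [ascProd_succ_apply, descProd_succ_apply, ascProd_zero_apply, descProd_zero_apply,
        hY.one m, hY.one (m + 1), map_smul, map_smul, C.descProd_S_dp (by omega),
        C.T_bracket_dp_apply, smul_smul, inv_pow_succ_mul_mul_self q_ne_zero]
    · have hS := C.dp_semiconj_S (k := m + 1) hi' (by omega)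
      -- both sides become `q • T₁⋯T_{i+1} T_i⁻¹ y_i T_i⁻¹ T_{i+1}⁻¹⋯T₁⁻¹ d₊` at vertex `m + 2`
      rw [hY.succ m i hi' (by omega), map_smul, hS.eq, ih hi' (by omega), hS.eq,
        C.descProd_S hi' (by omega), hY.T_comm hi' (by omega) (by omega) (by omega) (by omega)
          (by omega), C.S_ascProd hi' (by omega), C.S_T (by omega) (by omega)]
      rw [ascProd_succ_apply, descProd_succ_apply, hY.succ (m + 1) i hi' (by omega), map_smul,
        map_smul]

end IsYFamily

end DyckPathRep

theorem dyck_path_algebra_y_relations_general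
    (V : ℕ → Type) [∀ k, AddCommGroup (V k)] [∀ k, Module K (V k)]
    (T : ∀ k : ℕ, ℕ → (V k →ₗ[K] V k))
    (dp : ∀ k : ℕ, V k →ₗ[K] V (k + 1))
    (dm : ∀ k : ℕ, V (k + 1) →ₗ[K] V k)
    (hquad : ∀ k i, 1 ≤ i → i + 1 ≤ k →
      (T k i) ∘ₗ (T k i) = (1 - q) • T k i + q • LinearMap.id)
    (hbraid : ∀ k i, 1 ≤ i → i + 2 ≤ k →
      (T k i) ∘ₗ (T k (i + 1)) ∘ₗ (T k i) = (T k (i + 1)) ∘ₗ (T k i) ∘ₗ (T k (i + 1)))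
    (hcomm : ∀ k i j, 1 ≤ i → i + 1 ≤ k → 1 ≤ j → j + 1 ≤ k → i + 1 < j →
      (T k i) ∘ₗ (T k j) = (T k j) ∘ₗ (T k i))
    (hTdm : ∀ k i, 1 ≤ i → i + 1 ≤ k →
      (T k i) ∘ₗ (dm k) = (dm k) ∘ₗ (T (k + 1) i))
    (hdpT : ∀ k i, 1 ≤ i → i + 1 ≤ k →
      (dp k) ∘ₗ (T k i) = (T (k + 1) (i + 1)) ∘ₗ (dp k))
    (hrel8 : ∀ k, (dm (k + 1)) ∘ₗ
        ((dp (k + 1)) ∘ₗ (dm (k + 1)) - (dm (k + 2)) ∘ₗ (dp (k + 2))) ∘ₗ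
          (T (k + 2) (k + 1)) =
      q • (((dp k) ∘ₗ (dm k) - (dm (k + 1)) ∘ₗ (dp (k + 1))) ∘ₗ (dm (k + 1))))
    (hrel9 : ∀ k, (T (k + 2) 1) ∘ₗ
        ((dp (k + 1)) ∘ₗ (dm (k + 1)) - (dm (k + 2)) ∘ₗ (dp (k + 2))) ∘ₗ (dp (k + 1)) =
      q • ((dp (k + 1)) ∘ₗ ((dp k) ∘ₗ (dm k) - (dm (k + 1)) ∘ₗ (dp (k + 1)))))
    -- the elements y_i at each vertex m+1 (so that they exist): Y (m+1) i = y_i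
    (Y : ∀ m : ℕ, ℕ → (V m →ₗ[K] V m))
    -- y₁ = (q^{k−1}(q−1))⁻¹ (d₊d₋ − d₋d₊) T_{k−1}⋯T₁ at vertex k = m+1
    (hY1 : ∀ m : ℕ, Y (m + 1) 1 = (q ^ m * (q - 1))⁻¹ •
      (((dp m) ∘ₗ (dm m) - (dm (m + 1)) ∘ₗ (dp (m + 1))) ∘ₗ
        ((List.range m).foldr (fun i f => f ∘ₗ (T (m + 1) (i + 1))) LinearMap.id)))
    -- y_{i+1} = q T_i⁻¹ y_i T_i⁻¹, with T_i⁻¹ = q⁻¹ T_i + (1 − q⁻¹)·id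
    (hYrec : ∀ m i, 1 ≤ i → i ≤ m →
      Y (m + 1) (i + 1) = q •
        ((q⁻¹ • T (m + 1) i + (1 - q⁻¹) • LinearMap.id) ∘ₗ (Y (m + 1) i) ∘ₗ
          (q⁻¹ • T (m + 1) i + (1 - q⁻¹) • LinearMap.id))) :
    -- (a) y_i T_j = T_j y_i for i ∉ {j, j+1}
    (∀ m i j, 1 ≤ i → i ≤ m + 1 → 1 ≤ j → j + 1 ≤ m + 1 → i ≠ j → i ≠ j + 1 →
      (Y (m + 1) i) ∘ₗ (T (m + 1) j) = (T (m + 1) j) ∘ₗ (Y (m + 1) i)) ∧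
    -- (b) y_i d₋ = d₋ y_i
    (∀ m i, 1 ≤ i → i ≤ m + 1 →
      (Y (m + 1) i) ∘ₗ (dm (m + 1)) = (dm (m + 1)) ∘ₗ (Y (m + 2) i)) ∧
    -- (c) d₊ y_i = T₁⋯T_i · y_i · (T_i⁻¹⋯T₁⁻¹) · d₊
    (∀ m i, 1 ≤ i → i ≤ m + 1 →
      (dp (m + 1)) ∘ₗ (Y (m + 1) i) =
        ((List.range i).foldr (fun a f => (T (m + 2) (a + 1)) ∘ₗ f) LinearMap.id) ∘ₗ
          (Y (m + 2) i) ∘ₗ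
          ((List.range i).foldr (fun a f =>
              f ∘ₗ (q⁻¹ • T (m + 2) (a + 1) + (1 - q⁻¹) • LinearMap.id))
            LinearMap.id) ∘ₗ
          (dp (m + 1))) := by
  let C : DyckPathRep V := ⟨T, dp, dm, hquad, hbraid, hcomm, hTdm, hdpT, hrel8, hrel9⟩
  have hY : C.IsYFamily Y :=
    ⟨fun m v => by rw [hY1]; rfl, fun m i hi him v => by rw [hYrec m i hi him]; rfl⟩
  exact ⟨fun m i j hi him hj hjm hij hij' => LinearMap.ext (hY.T_comm hi him hj hjm hij hij'),
    fun m i hi him => LinearMap.ext (hY.dm_comm hi him),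
    fun m i hi him => LinearMap.ext (hY.dp_apply hi him)⟩

theorem dyck_path_algebra_y_relations
    (V : ℕ → Type) [∀ k, AddCommGroup (V k)] [∀ k, Module K (V k)]
    (T : ∀ k : ℕ, ℕ → (V k →ₗ[K] V k))
    (dp : ∀ k : ℕ, V k →ₗ[K] V (k + 1))
    (dm : ∀ k : ℕ, V (k + 1) →ₗ[K] V k)
    (hquad : ∀ k i, 1 ≤ i → i + 1 ≤ k →
      (T k i) ∘ₗ (T k i) = (1 - q) • T k i + q • LinearMap.id)
    (hbraid : ∀ k i, 1 ≤ i → i + 2 ≤ k →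
      (T k i) ∘ₗ (T k (i + 1)) ∘ₗ (T k i) = (T k (i + 1)) ∘ₗ (T k i) ∘ₗ (T k (i + 1)))
    (hcomm : ∀ k i j, 1 ≤ i → i + 1 ≤ k → 1 ≤ j → j + 1 ≤ k → i + 1 < j →
      (T k i) ∘ₗ (T k j) = (T k j) ∘ₗ (T k i))
    (hTdm : ∀ k i, 1 ≤ i → i + 1 ≤ k →
      (T k i) ∘ₗ (dm k) = (dm k) ∘ₗ (T (k + 1) i))
    (hdpT : ∀ k i, 1 ≤ i → i + 1 ≤ k →
      (dp k) ∘ₗ (T k i) = (T (k + 1) (i + 1)) ∘ₗ (dp k))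
    (hT1dp : ∀ k, (T (k + 2) 1) ∘ₗ ((dp (k + 1)) ∘ₗ (dp k)) = (dp (k + 1)) ∘ₗ (dp k))
    (hdmT : ∀ k, ((dm k) ∘ₗ (dm (k + 1))) ∘ₗ (T (k + 2) (k + 1)) = (dm k) ∘ₗ (dm (k + 1)))
    (hrel8 : ∀ k, (dm (k + 1)) ∘ₗ
        ((dp (k + 1)) ∘ₗ (dm (k + 1)) - (dm (k + 2)) ∘ₗ (dp (k + 2))) ∘ₗ
          (T (k + 2) (k + 1)) =
      q • (((dp k) ∘ₗ (dm k) - (dm (k + 1)) ∘ₗ (dp (k + 1))) ∘ₗ (dm (k + 1))))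
    (hrel9 : ∀ k, (T (k + 2) 1) ∘ₗ
        ((dp (k + 1)) ∘ₗ (dm (k + 1)) - (dm (k + 2)) ∘ₗ (dp (k + 2))) ∘ₗ (dp (k + 1)) =
      q • ((dp (k + 1)) ∘ₗ ((dp k) ∘ₗ (dm k) - (dm (k + 1)) ∘ₗ (dp (k + 1)))))
    -- the elements y_i at each vertex m+1 (so that they exist): Y (m+1) i = y_i
    (Y : ∀ m : ℕ, ℕ → (V m →ₗ[K] V m))
    -- y₁ = (q^{k−1}(q−1))⁻¹ (d₊d₋ − d₋d₊) T_{k−1}⋯T₁ at vertex k = m+1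
    (hY1 : ∀ m : ℕ, Y (m + 1) 1 = (q ^ m * (q - 1))⁻¹ •
      (((dp m) ∘ₗ (dm m) - (dm (m + 1)) ∘ₗ (dp (m + 1))) ∘ₗ
        ((List.range m).foldr (fun i f => f ∘ₗ (T (m + 1) (i + 1))) LinearMap.id)))
    -- y_{i+1} = q T_i⁻¹ y_i T_i⁻¹, with T_i⁻¹ = q⁻¹ T_i + (1 − q⁻¹)·id
    (hYrec : ∀ m i, 1 ≤ i → i ≤ m →
      Y (m + 1) (i + 1) = q •
        ((q⁻¹ • T (m + 1) i + (1 - q⁻¹) • LinearMap.id) ∘ₗ (Y (m + 1) i) ∘ₗ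
          (q⁻¹ • T (m + 1) i + (1 - q⁻¹) • LinearMap.id))) :
    -- (a) y_i T_j = T_j y_i for i ∉ {j, j+1}
    (∀ m i j, 1 ≤ i → i ≤ m + 1 → 1 ≤ j → j + 1 ≤ m + 1 → i ≠ j → i ≠ j + 1 →
      (Y (m + 1) i) ∘ₗ (T (m + 1) j) = (T (m + 1) j) ∘ₗ (Y (m + 1) i)) ∧
    -- (b) y_i d₋ = d₋ y_i
    (∀ m i, 1 ≤ i → i ≤ m + 1 →
      (Y (m + 1) i) ∘ₗ (dm (m + 1)) = (dm (m + 1)) ∘ₗ (Y (m + 2) i)) ∧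
    -- (c) d₊ y_i = T₁⋯T_i · y_i · (T_i⁻¹⋯T₁⁻¹) · d₊
    (∀ m i, 1 ≤ i → i ≤ m + 1 →
      (dp (m + 1)) ∘ₗ (Y (m + 1) i) =
        ((List.range i).foldr (fun a f => (T (m + 2) (a + 1)) ∘ₗ f) LinearMap.id) ∘ₗ
          (Y (m + 2) i) ∘ₗ
          ((List.range i).foldr (fun a f =>
              f ∘ₗ (q⁻¹ • T (m + 2) (a + 1) + (1 - q⁻¹) • LinearMap.id))
            LinearMap.id) ∘ₗ
          (dp (m + 1))) :=
  dyck_path_algebra_y_relations_general V T dp dm hquad hbraid hcomm hTdm hdpT hrel8 hrel9 Y hY1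
    hYrec
end
end
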